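/- arXiv:1601.03254 — 7 statements merged into one kernel-verified Lean document; each statement's English description precedes it below -/
import Mathlib

section
/- Let q ∈ ℕ with q ≥ 2, let T be the 1×1 matrix [q] or [−q] (i.e., the map x ↦ ±q·x on ℝ), and let D ⊂ ℝ be a finite set with #D = q. Then the attractor F(T,D) is both connected and of positive Lebesgue measure (i.e., a connected tile) if and only if D is an arithmetic progression: there exist b ∈ ℝ and a > 0 such that D = {b, b + a, b + 2a, …, b + (q−1)a}. -/
open MeasureTheory Set

lemma img_pos {r d m M : ℝ} (hr : 0 < r) :
    (fun x => r * (x + d)) '' Icc m M = Icc (r*(m+d)) (r*(M+d)) := by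
  have h : (fun x : ℝ => r * (x + d)) = (fun x => r * x + r * d) := by funext x; ring
  rw [h, Set.image_affine_Icc' hr]
  congr 1 <;> ring

lemma img_neg {r d m M : ℝ} (hr : r < 0) :
    (fun x => r * (x + d)) '' Icc m M = Icc (r*(M+d)) (r*(m+d)) := by
  have h : (fun x : ℝ => r * (x + d)) = ((fun x => (-r) * x + r * d) ∘ Neg.neg) := by
    funext x; simp; ring
  rw [h, Set.image_comp, Set.image_neg_Icc, Set.image_affine_Icc' (by linarith : (0:ℝ) < -r)]
  congr 1 <;> ring

lemma attractor_subset {p : ℝ} (hp : 1 < |p|) {D : Finset ℝ} {A B : Set ℝ}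
    (hAne : A.Nonempty) (hA : IsCompact A) (hBne : B.Nonempty) (hB : IsCompact B)
    (hAsub : A ⊆ ⋃ d ∈ D, (fun x => p⁻¹ * (x + d)) '' A)
    (hBsub : (⋃ d ∈ D, (fun x => p⁻¹ * (x + d)) '' B) ⊆ B) : A ⊆ B := by
  have hrpos : (0:ℝ) < |p| := by linarith
  have hr1 : |p|⁻¹ < 1 := inv_lt_one_of_one_lt₀ hp
  have hr0 : (0:ℝ) ≤ |p|⁻¹ := by positivity
  obtain ⟨y0, hy0, hmax⟩ := hA.exists_isMaxOn hAne (Metric.continuous_infDist_pt B).continuousOn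
  have key : ∀ y ∈ A, Metric.infDist y B ≤ |p|⁻¹ * Metric.infDist y0 B := by
    intro y hy
    have := hAsub hy
    simp only [Set.mem_iUnion, Set.mem_image] at this
    obtain ⟨d, hd, y', hy', hyy⟩ := this
    subst hyy
    obtain ⟨bb, hbB, hbd⟩ := hB.exists_infDist_eq_dist hBne y'
    have hfb : p⁻¹ * (bb + d) ∈ B := by
      apply hBsub
      simp only [Set.mem_iUnion, Set.mem_image]
      exact ⟨d, hd, bb, hbB, rfl⟩
    have h1 : Metric.infDist (p⁻¹*(y'+d)) B ≤ dist (p⁻¹*(y'+d)) (p⁻¹*(bb+d)) :=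
      Metric.infDist_le_dist_of_mem hfb
    have hdist : dist (p⁻¹*(y'+d)) (p⁻¹*(bb+d)) = |p|⁻¹ * dist y' bb := by
      rw [Real.dist_eq, Real.dist_eq, ← abs_inv, ← abs_mul]
      congr 1; ring
    rw [hdist] at h1
    calc Metric.infDist (p⁻¹*(y'+d)) B ≤ |p|⁻¹ * dist y' bb := h1
      _ = |p|⁻¹ * Metric.infDist y' B := by rw [hbd]
      _ ≤ |p|⁻¹ * Metric.infDist y0 B := mul_le_mul_of_nonneg_left (hmax hy') hr0
  have h0 : Metric.infDist y0 B ≤ 0 := by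
    have := key y0 hy0
    nlinarith [Metric.infDist_nonneg (x := y0) (s := B)]
  intro x hx
  have hx0 : Metric.infDist x B = 0 := by
    have := key x hx
    have h2 := Metric.infDist_nonneg (x := x) (s := B)
    nlinarith [Metric.infDist_nonneg (x := y0) (s := B)]
  have := (Metric.mem_closure_iff_infDist_zero hBne).2 hx0
  rwa [hB.isClosed.closure_eq] at this

lemma iUnion_tile (n : ℕ) (hn : 0 < n) (c δ : ℝ) (hδ : 0 < δ) :
    ⋃ k ∈ Finset.range n, Icc (c + k*δ) (c + k*δ + δ) = Icc c (c + n*δ) := by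
  induction n with
  | zero => omega
  | succ n ih =>
    rcases Nat.eq_zero_or_pos n with h0 | hpos
    · subst h0; simp
    · rw [Finset.range_add_one, Finset.set_biUnion_insert, ih hpos, Set.union_comm,
        Icc_union_Icc_eq_Icc (by nlinarith [Nat.cast_nonneg (α := ℝ) n])
          (by nlinarith [Nat.cast_nonneg (α := ℝ) n])]
      congr 1
      push_cast; ring

lemma core_ap (q : ℕ) (hq : 2 ≤ q) (m M : ℝ) (hmM : m < M) (c : ℕ → ℝ)
    (hmono : ∀ i j : ℕ, i < j → j < q → c i < c j)
    (hcov : Icc m M = ⋃ k ∈ Finset.range q, Icc (c k) (c k + (M-m)/q)) :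
    ∀ k < q, c k = m + k * ((M-m)/q) := by
  have hq0 : (0:ℝ) < q := by positivity
  set ℓ : ℝ := (M-m)/q with hℓdef
  have hℓ : 0 < ℓ := by apply div_pos <;> linarith
  have hmemU : ∀ x, x ∈ Icc m M → ∃ k, k < q ∧ c k ≤ x ∧ x ≤ c k + ℓ := by
    intro x hx
    have := hcov.subset hx
    simp only [Set.mem_iUnion, Finset.mem_range, Set.mem_Icc] at this
    obtain ⟨k, hk, h1, h2⟩ := this
    exact ⟨k, hk, h1, h2⟩
  have hbnd : ∀ k, k < q → m ≤ c k ∧ c k + ℓ ≤ M := by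
    intro k hk
    have h1 : c k ∈ Icc m M := by
      rw [hcov]
      simp only [Set.mem_iUnion, Finset.mem_range, Set.mem_Icc]
      exact ⟨k, hk, le_refl _, by linarith⟩
    have h2 : c k + ℓ ∈ Icc m M := by
      rw [hcov]
      simp only [Set.mem_iUnion, Finset.mem_range, Set.mem_Icc]
      exact ⟨k, hk, by linarith, le_refl _⟩
    exact ⟨h1.1, h2.2⟩
  have hmono' : ∀ i j : ℕ, i ≤ j → j < q → c i ≤ c j := by
    intro i j hij hj
    rcases eq_or_lt_of_le hij with rfl | h
    · exact le_refl _
    · exact (hmono i j h hj).le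
  have h0 : c 0 = m := by
    obtain ⟨k, hk, h1, h2⟩ := hmemU m ⟨le_refl _, hmM.le⟩
    have hck : c k = m := le_antisymm h1 (hbnd k hk).1
    rcases Nat.eq_zero_or_pos k with rfl | hkpos
    · exact hck
    · exfalso
      have := hmono 0 k hkpos hk
      have := (hbnd 0 (by omega)).1
      linarith
  have htop : c (q-1) = M - ℓ := by
    obtain ⟨k, hk, h1, h2⟩ := hmemU M ⟨hmM.le, le_refl _⟩
    have hck : c k = M - ℓ := by
      have := (hbnd k hk).2; linarith
    have hkq : k = q - 1 := by
      by_contra hne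
      have hklt : k < q - 1 := by omega
      have := hmono k (q-1) hklt (by omega)
      have := (hbnd (q-1) (by omega)).2
      linarith
    rw [← hkq]; exact hck
  have hstep : ∀ k, k + 1 < q → c (k+1) ≤ c k + ℓ := by
    intro k hk1
    by_contra hgap
    push_neg at hgap
    set x : ℝ := (c k + ℓ + c (k+1))/2 with hxdef
    have hxm : m ≤ x := by have := (hbnd k (by omega)).1; linarith
    have hxM : x ≤ M := by have := (hbnd (k+1) hk1).2; linarith
    obtain ⟨j, hj, h1, h2⟩ := hmemU x ⟨hxm, hxM⟩
    rcases le_or_gt j k with hjk | hjk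
    · have := hmono' j k hjk (by omega)
      have : x ≤ c k + ℓ := by linarith
      linarith
    · have := hmono' (k+1) j hjk hj
      have : c (k+1) ≤ x := by linarith
      linarith
  have hchain : ∀ t k, k + t < q → c (k + t) ≤ c k + t * ℓ := by
    intro t
    induction t with
    | zero => intro k _; simp
    | succ t ih =>
      intro k hk
      have h1 : c (k + t + 1) ≤ c (k + t) + ℓ := hstep (k + t) (by omega)
      have h2 := ih k (by omega)
      have : (k : ℕ) + (t + 1) = (k + t) + 1 := by omega
      rw [this]
      push_cast
      push_cast at h2
      linarith
  intro k hk
  have hub : c k ≤ m + k * ℓ := by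
    have := hchain k 0 (by omega)
    simpa [h0] using this
  have hlb : m + k * ℓ ≤ c k := by
    have h1 := hchain (q - 1 - k) k (by omega)
    have e1 : k + (q - 1 - k) = q - 1 := by omega
    rw [e1, htop] at h1
    have hcast : ((q - 1 - k : ℕ) : ℝ) = (q:ℝ) - 1 - (k:ℝ) := by
      rw [Nat.cast_sub (by omega), Nat.cast_sub (by omega)]
      push_cast; ring
    rw [hcast] at h1
    have hMl : M - ℓ = m + ((q:ℝ) - 1) * ℓ := by
      rw [hℓdef]; field_simp; ring
    linarith
  linarith

lemma biUnion_fimage {f : ℕ → ℝ} {s : Finset ℕ} (S : ℝ → Set ℝ) :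
    ⋃ d ∈ s.image f, S d = ⋃ k ∈ s, S (f k) := by
  apply Set.Subset.antisymm <;> intro x hx <;>
    simp only [Set.mem_iUnion, Finset.mem_image] at hx ⊢
  · obtain ⟨d, ⟨k, hk, rfl⟩, h⟩ := hx
    exact ⟨k, hk, h⟩
  · obtain ⟨k, hk, h⟩ := hx
    exact ⟨f k, ⟨k, hk, rfl⟩, h⟩

lemma biUnion_rev (q : ℕ) (S : ℕ → Set ℝ) :
    (⋃ k ∈ Finset.range q, S (q-1-k)) = ⋃ k ∈ Finset.range q, S k := by
  rcases Nat.eq_zero_or_pos q with rfl | hq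
  · simp
  apply Set.Subset.antisymm <;> intro x hx <;>
    simp only [Set.mem_iUnion, Finset.mem_range] at hx ⊢ <;> obtain ⟨k, hk, hxk⟩ := hx
  · exact ⟨q-1-k, by omega, hxk⟩
  · exact ⟨q-1-k, by omega, by rwa [show q-1-(q-1-k) = k by omega]⟩

/-- Let `q ≥ 2`, let `T` be the 1×1 matrix `[q]` or `[-q]` (i.e. the map
`x ↦ ±q·x` on `ℝ`), and let `D ⊂ ℝ` be a finite set with `#D = q`.  The attractor `F(T,D)`
(the unique nonempty compact set with `F = ⋃_{d ∈ D} T⁻¹(F + d)`) is a connected tile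
(connected and of positive Lebesgue measure) iff `D` is an arithmetic progression
`{b, b+a, …, b+(q-1)a}` with `a > 0`. -/
theorem stmt0 (q : ℕ) (hq : 2 ≤ q) (p : ℝ) (hp : p = (q : ℝ) ∨ p = -(q : ℝ))
    (D : Finset ℝ) (hD : D.card = q)
    (F : Set ℝ) (hne : F.Nonempty) (hcpt : IsCompact F)
    (hfix : F = ⋃ d ∈ D, (fun x => p⁻¹ * (x + d)) '' F) :
    (IsConnected F ∧ 0 < volume F) ↔
      ∃ b a : ℝ, 0 < a ∧ D = (Finset.range q).image (fun k : ℕ => b + (k : ℝ) * a) := by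
  have hq0 : (0:ℝ) < q := by positivity
  have hq1R : (1:ℝ) < q := by exact_mod_cast by omega
  have habs : |p| = (q:ℝ) := by
    rcases hp with rfl | rfl
    · exact abs_of_pos hq0
    · rw [abs_neg, abs_of_pos hq0]
  have hp1 : 1 < |p| := by rw [habs]; exact hq1R
  have hqne : (q:ℝ) ≠ 0 := ne_of_gt hq0
  have hq1ne : (q:ℝ) - 1 ≠ 0 := by linarith
  constructor
  · rintro ⟨hconn, hvol⟩
    set m := sInf F with hm
    set M := sSup F with hM
    have hmF : m ∈ F := hcpt.sInf_mem hne
    have hMF : M ∈ F := hcpt.sSup_mem hne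
    have hFI : F = Icc m M := by
      apply Set.Subset.antisymm
      · intro x hx
        exact ⟨csInf_le hcpt.bddBelow hx, le_csSup hcpt.bddAbove hx⟩
      · exact (hconn.isPreconnected.ordConnected).out hmF hMF
    have hmM : m < M := by
      rw [hFI, Real.volume_Icc] at hvol
      have := (ENNReal.ofReal_pos).1 hvol
      linarith
    rw [hFI] at hfix
    -- enumeration of D
    set e : ℕ → ℝ := fun k => if h : k < q then ((D.orderIsoOfFin hD) ⟨k, h⟩ : ℝ) else 0 with he
    have hemem : ∀ k, k < q → e k ∈ D := by
      intro k hk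
      simp only [he, dif_pos hk]
      exact ((D.orderIsoOfFin hD) ⟨k, hk⟩).2
    have hemono : ∀ i j : ℕ, i < j → j < q → e i < e j := by
      intro i j hij hj
      have hi : i < q := lt_trans hij hj
      simp only [he, dif_pos hi, dif_pos hj]
      exact Subtype.coe_lt_coe.2 ((D.orderIsoOfFin hD).strictMono
        (show (⟨i, hi⟩ : Fin q) < ⟨j, hj⟩ from hij))
    have hesurj : ∀ x ∈ D, ∃ k, k < q ∧ e k = x := by
      intro x hx
      obtain ⟨i, hi⟩ := (D.orderIsoOfFin hD).surjective ⟨x, hx⟩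
      refine ⟨i.1, i.2, ?_⟩
      simp only [he, dif_pos i.2]
      rw [show (⟨i.1, i.2⟩ : Fin q) = i from rfl, hi]
    rcases hp with rfl | rfl
    · -- p = q
      have hipos : (0:ℝ) < ((q:ℝ))⁻¹ := by positivity
      set c : ℕ → ℝ := fun k => ((q:ℝ))⁻¹ * (m + e k) with hc
      have hcl : ∀ k, ((q:ℝ))⁻¹ * (m + e k) = c k := fun k => by rw [hc]
      have hcr : ∀ k, ((q:ℝ))⁻¹ * (M + e k) = c k + (M-m)/q := by
        intro k; rw [hc]; field_simp; ring
      have hcov : Icc m M = ⋃ k ∈ Finset.range q, Icc (c k) (c k + (M-m)/q) := by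
        rw [hfix]
        apply Set.Subset.antisymm <;> intro x hx <;>
          simp only [Set.mem_iUnion, Finset.mem_range] at hx ⊢
        · obtain ⟨d, hd, hxd⟩ := hx
          obtain ⟨k, hk, rfl⟩ := hesurj d hd
          rw [img_pos hipos, hcl, hcr] at hxd
          exact ⟨k, hk, hxd⟩
        · obtain ⟨k, hk, hxk⟩ := hx
          refine ⟨e k, hemem k hk, ?_⟩
          rw [img_pos hipos, hcl, hcr]
          exact hxk
      have hcmono : ∀ i j : ℕ, i < j → j < q → c i < c j := by
        intro i j hij hj
        simp only [hc]
        have := hemono i j hij hj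
        apply mul_lt_mul_of_pos_left (by linarith) hipos
      have hck := core_ap q hq m M hmM c hcmono hcov
      have heval : ∀ k, k < q → e k = ((q:ℝ)-1)*m + k*(M-m) := by
        intro k hk
        have h1 := hck k hk
        rw [← hcl] at h1
        have h2 : m + (k:ℝ) * ((M-m)/q) = ((q:ℝ))⁻¹ * (q*m + k*(M-m)) := by
          field_simp
        rw [h2] at h1
        have := mul_left_cancel₀ (ne_of_gt hipos) h1
        linarith
      refine ⟨((q:ℝ)-1)*m, M - m, by linarith, ?_⟩
      apply Finset.eq_of_subset_of_card_le
      · intro x hx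
        obtain ⟨k, hk, hek⟩ := hesurj x hx
        refine Finset.mem_image.2 ⟨k, Finset.mem_range.2 hk, ?_⟩
        rw [← hek, heval k hk]
      · rw [hD]
        exact le_trans Finset.card_image_le (by simp)
    · -- p = -q
      have hineg : ((-(q:ℝ)))⁻¹ < 0 := by
        rw [inv_neg]
        have := inv_pos.2 hq0
        linarith
      set c : ℕ → ℝ := fun k => ((-(q:ℝ)))⁻¹ * (M + e (q-1-k)) with hc
      have hcl : ∀ k, ((-(q:ℝ)))⁻¹ * (M + e (q-1-k)) = c k := fun k => by rw [hc]
      have hcr : ∀ k, ((-(q:ℝ)))⁻¹ * (m + e (q-1-k)) = c k + (M-m)/q := by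
        intro k; rw [hc]; simp only; rw [inv_neg]; field_simp; ring
      have hcov : Icc m M = ⋃ k ∈ Finset.range q, Icc (c k) (c k + (M-m)/q) := by
        rw [hfix]
        apply Set.Subset.antisymm <;> intro x hx <;>
          simp only [Set.mem_iUnion, Finset.mem_range] at hx ⊢
        · obtain ⟨d, hd, hxd⟩ := hx
          obtain ⟨j, hj, rfl⟩ := hesurj d hd
          refine ⟨q-1-j, by omega, ?_⟩
          rw [img_neg hineg] at hxd
          have h1 := hcl (q-1-j)
          have h2 := hcr (q-1-j)
          rw [show q-1-(q-1-j) = j by omega] at h1 h2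
          rw [h1, h2] at hxd
          exact hxd
        · obtain ⟨k, hk, hxk⟩ := hx
          refine ⟨e (q-1-k), hemem _ (by omega), ?_⟩
          rw [img_neg hineg, hcl, hcr]
          exact hxk
      have hcmono : ∀ i j : ℕ, i < j → j < q → c i < c j := by
        intro i j hij hj
        simp only [hc]
        have h1 : e (q-1-j) < e (q-1-i) := hemono _ _ (by omega) (by omega)
        have := mul_lt_mul_of_neg_left (show M + e (q-1-j) < M + e (q-1-i) by linarith) hineg
        exact this
      have hck := core_ap q hq m M hmM c hcmono hcov
      have heval : ∀ k, k < q → e (q-1-k) = -((q:ℝ)*m) - k*(M-m) - M := by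
        intro k hk
        have h1 := hck k hk
        rw [← hcl k] at h1
        have h2 : m + (k:ℝ) * ((M-m)/q) = ((-(q:ℝ)))⁻¹ * (-((q:ℝ)*m) - k*(M-m)) := by
          rw [inv_neg]; field_simp; ring
        rw [h2] at h1
        have h3 := mul_left_cancel₀ (ne_of_lt hineg) h1
        linarith
      have hevalj : ∀ j, j < q → e j = (-((q:ℝ)*m) - ((q:ℝ)-1)*(M-m) - M) + j*(M-m) := by
        intro j hj
        have h1 := heval (q-1-j) (by omega)
        rw [show q-1-(q-1-j) = j by omega] at h1
        have hcast : ((q-1-j : ℕ):ℝ) = (q:ℝ) - 1 - (j:ℝ) := by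
          rw [Nat.cast_sub (by omega), Nat.cast_sub (by omega)]
          push_cast; ring
        rw [hcast] at h1
        linarith
      refine ⟨-((q:ℝ)*m) - ((q:ℝ)-1)*(M-m) - M, M - m, by linarith, ?_⟩
      apply Finset.eq_of_subset_of_card_le
      · intro x hx
        obtain ⟨k, hk, hek⟩ := hesurj x hx
        refine Finset.mem_image.2 ⟨k, Finset.mem_range.2 hk, ?_⟩
        rw [← hek, hevalj k hk]
      · rw [hD]
        exact le_trans Finset.card_image_le (by simp)
  · rintro ⟨b, a, ha, hDeq⟩
    rcases hp with rfl | rfl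
    · -- p = q
      set c0 : ℝ := b/((q:ℝ)-1) with hc0
      have hI : (⋃ d ∈ D, (fun x => ((q:ℝ))⁻¹ * (x + d)) '' Icc c0 (c0+a)) = Icc c0 (c0+a) := by
        rw [hDeq, biUnion_fimage]
        have hpt : ∀ k : ℕ, (fun x => ((q:ℝ))⁻¹ * (x + (b + (k:ℝ)*a))) '' Icc c0 (c0+a)
            = Icc (c0 + (k:ℝ)*(a/q)) (c0 + (k:ℝ)*(a/q) + a/q) := by
          intro k
          rw [img_pos (by positivity)]
          have e1 : ((q:ℝ))⁻¹ * (c0 + (b + (k:ℝ)*a)) = c0 + (k:ℝ)*(a/q) := by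
            rw [hc0]; field_simp; ring
          have e2 : ((q:ℝ))⁻¹ * ((c0 + a) + (b + (k:ℝ)*a)) = c0 + (k:ℝ)*(a/q) + a/q := by
            rw [hc0]; field_simp; ring
          rw [e1, e2]
        simp only [hpt]
        rw [iUnion_tile q (by omega) c0 (a/q) (by positivity)]
        congr 1
        field_simp
      have hFeq : F = Icc c0 (c0+a) := by
        apply Set.Subset.antisymm
        · exact attractor_subset hp1 hne hcpt (nonempty_Icc.2 (by linarith)) isCompact_Icc
            hfix.subset hI.subset
        · exact attractor_subset hp1 (nonempty_Icc.2 (by linarith)) isCompact_Icc hne hcpt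
            hI.symm.subset hfix.symm.subset
      rw [hFeq]
      refine ⟨isConnected_Icc (by linarith), ?_⟩
      rw [Real.volume_Icc]
      apply ENNReal.ofReal_pos.2
      linarith
    · -- p = -q
      set c0 : ℝ := -(b + (q:ℝ)*a)/((q:ℝ)+1) with hc0
      have hq1ne' : (q:ℝ) + 1 ≠ 0 := by linarith
      have hineg : ((-(q:ℝ)))⁻¹ < 0 := by
        rw [inv_neg]
        have := inv_pos.2 hq0
        linarith
      have hI : (⋃ d ∈ D, (fun x => ((-(q:ℝ)))⁻¹ * (x + d)) '' Icc c0 (c0+a)) = Icc c0 (c0+a) := by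
        rw [hDeq, biUnion_fimage]
        have hpt : ∀ k : ℕ, (fun x => ((-(q:ℝ)))⁻¹ * (x + (b + (k:ℝ)*a))) '' Icc c0 (c0+a)
            = Icc (c0 + ((q:ℝ)-1-(k:ℝ))*(a/q)) (c0 + ((q:ℝ)-1-(k:ℝ))*(a/q) + a/q) := by
          intro k
          rw [img_neg hineg]
          have e1 : ((-(q:ℝ)))⁻¹ * ((c0 + a) + (b + (k:ℝ)*a))
              = c0 + ((q:ℝ)-1-(k:ℝ))*(a/q) := by
            rw [hc0, inv_neg]; field_simp; ring
          have e2 : ((-(q:ℝ)))⁻¹ * (c0 + (b + (k:ℝ)*a))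
              = c0 + ((q:ℝ)-1-(k:ℝ))*(a/q) + a/q := by
            rw [hc0, inv_neg]; field_simp; ring
          rw [e1, e2]
        simp only [hpt]
        have hcast : ∀ k, k < q → ((q:ℝ)-1-(k:ℝ)) = ((q-1-k : ℕ):ℝ) := by
          intro k hk
          rw [Nat.cast_sub (by omega), Nat.cast_sub (by omega)]
          push_cast; ring
        have hswap : (⋃ k ∈ Finset.range q,
              Icc (c0 + ((q:ℝ)-1-(k:ℝ))*(a/q)) (c0 + ((q:ℝ)-1-(k:ℝ))*(a/q) + a/q))
            = ⋃ k ∈ Finset.range q,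
              Icc (c0 + ((q-1-k:ℕ):ℝ)*(a/q)) (c0 + ((q-1-k:ℕ):ℝ)*(a/q) + a/q) := by
          ext x
          simp only [Set.mem_iUnion, Finset.mem_range]
          constructor <;> rintro ⟨k, hk, hx⟩
          · exact ⟨k, hk, by rwa [hcast k hk] at hx⟩
          · exact ⟨k, hk, by rwa [← hcast k hk] at hx⟩
        rw [hswap,
          biUnion_rev q (fun j => Icc (c0 + (j:ℝ)*(a/q)) (c0 + (j:ℝ)*(a/q) + a/q)),
          iUnion_tile q (by omega) c0 (a/q) (by positivity)]
        congr 1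
        field_simp
      have hFeq : F = Icc c0 (c0+a) := by
        apply Set.Subset.antisymm
        · exact attractor_subset hp1 hne hcpt (nonempty_Icc.2 (by linarith)) isCompact_Icc
            hfix.subset hI.subset
        · exact attractor_subset hp1 (nonempty_Icc.2 (by linarith)) isCompact_Icc hne hcpt
            hI.symm.subset hfix.symm.subset
      rw [hFeq]
      refine ⟨isConnected_Icc (by linarith), ?_⟩
      rw [Real.volume_Icc]
      apply ENNReal.ofReal_pos.2
      linarith
end

section
/- Let v ∈ ℝⁿ ∖ {0}, let D = {0, d₂v, d₃v, …, d_q v} ⊂ ℝⁿ with d₂, …, d_q ∈ ℝ (a collinear digit set), and let T = pI for a real number p with |p| > 1. Let F = F(T,D), let K be the convex hull of F, and let K₁ = ⋃_{d ∈ D} T⁻¹(K + d). Then F is connected if and only if K = K₁. -/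
/-!
The attractor lies on the line `ℝ ∙ v`: for a functional `φ` with `φ v = 0`, the maximum of
`|φ|` on `F` is attained at some `p⁻¹ • (a + d)`, where it equals `|φ a| / |p|`, so it is `0`.
On a line the connected sets are the convex ones, so if `F` is connected then `K = F` and
`K = K₁` is the fixed-point equation of `F`. Conversely, if `K = K₁` then `K` is a bounded
nonempty fixed set of the contracting Hutchinson operator, so it has the same closure as `F`
(their Hausdorff distance `H` satisfies `H ≤ |p|⁻¹ H < ∞`); hence `K = F` and `F` is convex.
-/

open EMetric Metric Set
open scoped NNReal ENNReal

section LipschitzImage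

variable {α ι : Type*} [PseudoEMetricSpace α] {r : ℝ≥0} {f : α → α}

theorem LipschitzWith.infEDist_image_le (hf : LipschitzWith r f) (hr : r ≠ 0) (x : α)
    (t : Set α) : infEDist (f x) (f '' t) ≤ r * infEDist x t := by
  refine (ENNReal.inv_mul_le_iff (by simpa using hr) ENNReal.coe_ne_top).1 ?_
  refine le_infEDist.2 fun y hy => (ENNReal.inv_mul_le_iff (by simpa using hr)
    ENNReal.coe_ne_top).2 ?_
  exact (infEDist_le_edist_of_mem (mem_image_of_mem f hy)).trans (hf x y)

theorem LipschitzWith.hausdorffEDist_image_le (hf : LipschitzWith r f) (hr : r ≠ 0)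
    (s t : Set α) : hausdorffEDist (f '' s) (f '' t) ≤ r * hausdorffEDist s t := by
  refine hausdorffEDist_le_of_infEDist ?_ ?_
  · rintro _ ⟨x, hx, rfl⟩
    calc infEDist (f x) (f '' t) ≤ r * infEDist x t := hf.infEDist_image_le hr x t
      _ ≤ r * hausdorffEDist s t := by gcongr; exact infEDist_le_hausdorffEDist_of_mem hx
  · rintro _ ⟨x, hx, rfl⟩
    calc infEDist (f x) (f '' s) ≤ r * infEDist x s := hf.infEDist_image_le hr x s
      _ ≤ r * hausdorffEDist t s := by gcongr; exact infEDist_le_hausdorffEDist_of_mem hx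
      _ = r * hausdorffEDist s t := by rw [hausdorffEDist_comm]

theorem hausdorffEDist_biUnion_image_le {g : ι → α → α} {I : Set ι}
    (hg : ∀ i ∈ I, LipschitzWith r (g i)) (hr : r ≠ 0) (s t : Set α) :
    hausdorffEDist (⋃ i ∈ I, g i '' s) (⋃ i ∈ I, g i '' t) ≤ r * hausdorffEDist s t :=
  hausdorffEDist_iUnion_le.trans <| iSup_le fun i => hausdorffEDist_iUnion_le.trans <|
    iSup_le fun hi => (hg i hi).hausdorffEDist_image_le hr s t

end LipschitzImage

theorem closure_eq_of_eq_biUnion_image {α ι : Type*} [PseudoMetricSpace α] {r : ℝ≥0}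
    {f : ι → α → α} {I : Set ι} (hf : ∀ i ∈ I, LipschitzWith r (f i)) (hr : r < 1) {s t : Set α}
    (hs : s.Nonempty) (ht : t.Nonempty) (hsb : Bornology.IsBounded s)
    (htb : Bornology.IsBounded t) (hsfix : s = ⋃ i ∈ I, f i '' s)
    (htfix : t = ⋃ i ∈ I, f i '' t) : closure s = closure t := by
  -- The image estimate needs a nonzero constant (for `r = 0` it fails at `0 * ⊤ = 0`).
  set r' : ℝ≥0 := max r 2⁻¹
  have hr' : (r' : ℝ≥0∞) < 1 := by
    rw [ENNReal.coe_lt_one_iff]; exact max_lt hr (by norm_num)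
  have hr'0 : r' ≠ 0 := (lt_of_lt_of_le (by norm_num) (le_max_right r 2⁻¹)).ne'
  have hle : hausdorffEDist s t ≤ r' * hausdorffEDist s t := by
    conv_lhs => rw [hsfix, htfix]
    exact hausdorffEDist_biUnion_image_le (fun i hi => (hf i hi).weaken (le_max_left _ _))
      hr'0 s t
  have hfin := hausdorffEDist_ne_top_of_nonempty_of_bounded hs ht hsb htb
  refine hausdorffEDist_zero_iff_closure_eq_closure.1 ?_
  by_contra h0
  exact hle.not_gt (by simpa using ENNReal.mul_lt_mul_left h0 hfin hr')

section Linear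

variable {E : Type*}

theorem map_eq_zero_of_eq_biUnion_smul_add [AddCommGroup E] [Module ℝ E] [TopologicalSpace E]
    {φ : E →ₗ[ℝ] ℝ} (hφ : Continuous φ) {D : Set E} (hφD : ∀ d ∈ D, φ d = 0) {p : ℝ}
    (hp : 1 < |p|) {F : Set E} (hne : F.Nonempty) (hcpt : IsCompact F)
    (hfix : F = ⋃ d ∈ D, (fun x => p⁻¹ • (x + d)) '' F) : ∀ x ∈ F, φ x = 0 := by
  obtain ⟨x₀, hx₀, hmax⟩ := hcpt.exists_isMaxOn hne (continuous_abs.comp hφ).continuousOn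
  have hx₀' := hx₀
  rw [hfix] at hx₀'
  simp only [mem_iUnion, mem_image] at hx₀'
  obtain ⟨d, hd, a, ha, rfl⟩ := hx₀'
  have hscale : |p| * |φ (p⁻¹ • (a + d))| = |φ a| := by
    rw [map_smul, map_add, hφD d hd, add_zero, smul_eq_mul, abs_mul, abs_inv,
      mul_inv_cancel_left₀ (by positivity)]
  have hle : |φ a| ≤ |φ (p⁻¹ • (a + d))| := hmax ha
  have hzero : |φ (p⁻¹ • (a + d))| = 0 := by
    nlinarith [abs_nonneg (φ (p⁻¹ • (a + d)))]
  exact fun x hx => abs_nonpos_iff.1 (hzero ▸ hmax hx)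

theorem subset_span_of_eq_biUnion_smul_add [NormedAddCommGroup E] [NormedSpace ℝ E]
    [FiniteDimensional ℝ E] {D : Set E} {p : ℝ} (hp : 1 < |p|) {F : Set E} (hne : F.Nonempty)
    (hcpt : IsCompact F) (hfix : F = ⋃ d ∈ D, (fun x => p⁻¹ • (x + d)) '' F) :
    F ⊆ Submodule.span ℝ D := by
  intro x hx
  rw [← Subspace.dualAnnihilator_dualCoannihilator_eq (W := Submodule.span ℝ D),
    SetLike.mem_coe, Submodule.mem_dualCoannihilator]
  intro φ hφ
  rw [Submodule.mem_dualAnnihilator] at hφ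
  exact map_eq_zero_of_eq_biUnion_smul_add φ.continuous_of_finiteDimensional
    (fun d hd => hφ d (Submodule.subset_span hd)) hp hne hcpt hfix x hx

theorem IsPreconnected.convex_of_subset_span_singleton [NormedAddCommGroup E]
    [NormedSpace ℝ E] {v : E} {S : Set E} (hS : IsPreconnected S) (hSv : S ⊆ (ℝ ∙ v)) :
    Convex ℝ S := by
  rcases eq_or_ne v 0 with rfl | hv
  · refine Subsingleton.convex (subsingleton_of_subset_singleton (a := 0) ?_)
    simpa using hSv
  obtain ⟨g, -, hgv⟩ := exists_dual_vector'' ℝ v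
  have hnorm : ‖v‖ ≠ 0 := norm_ne_zero_iff.2 hv
  let ψ : ℝ →ₗ[ℝ] E := LinearMap.toSpanSingleton ℝ E (‖v‖⁻¹ • v)
  have hψg : ∀ x ∈ S, ψ (g x) = x := by
    intro x hx
    obtain ⟨c, rfl⟩ := Submodule.mem_span_singleton.1 (hSv hx)
    simp [ψ, hgv, smul_smul, mul_assoc, mul_inv_cancel₀ hnorm]
  have hSψg : S = ψ '' (g '' S) := by rw [image_image, image_congr hψg, image_id']
  rw [hSψg]
  exact (hS.image _ g.continuous.continuousOn).ordConnected.convex.linear_image ψ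

end Linear

theorem lipschitzWith_smul_add {E : Type*} [SeminormedAddCommGroup E] [NormedSpace ℝ E]
    (c : ℝ) (d : E) : LipschitzWith ‖c‖₊ (fun x : E => c • (x + d)) := by
  have h := (lipschitzWith_smul c).comp (isometry_add_right d).lipschitz
  rwa [mul_one] at h

theorem stmt1_general (n : ℕ) (v : Fin n → ℝ)
    (D : Finset (Fin n → ℝ))
    (hcol : ∀ d ∈ D, ∃ c : ℝ, d = c • v)
    (p : ℝ) (hp : 1 < |p|)
    (F : Set (Fin n → ℝ)) (hne : F.Nonempty) (hcpt : IsCompact F)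
    (hfix : F = ⋃ d ∈ D, (fun x => p⁻¹ • (x + d)) '' F) :
    IsConnected F ↔
      convexHull ℝ F = ⋃ d ∈ D, (fun x => p⁻¹ • (x + d)) '' (convexHull ℝ F) := by
  constructor
  · intro hconn
    have hline : F ⊆ ℝ ∙ v := (subset_span_of_eq_biUnion_smul_add hp hne hcpt hfix).trans <|
      Submodule.span_le.2 fun d hd => by
        obtain ⟨c, rfl⟩ := hcol d hd
        exact Submodule.smul_mem _ c (Submodule.mem_span_singleton_self v)
    rw [(hconn.isPreconnected.convex_of_subset_span_singleton hline).convexHull_eq]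
    exact hfix
  · intro hK
    have hcontract : ‖p⁻¹‖₊ < 1 := by
      rw [← NNReal.coe_lt_one, coe_nnnorm, norm_inv, Real.norm_eq_abs]
      exact inv_lt_one_of_one_lt₀ hp
    have hclosure : closure (convexHull ℝ F) = closure F :=
      closure_eq_of_eq_biUnion_image (fun d _ => lipschitzWith_smul_add p⁻¹ d) hcontract
        hne.convexHull hne (isBounded_convexHull.2 hcpt.isBounded) hcpt.isBounded hK hfix
    have hKF : convexHull ℝ F = F := by
      refine (subset_closure.trans ?_).antisymm (subset_convexHull ℝ F)
      rw [hclosure, hcpt.isClosed.closure_eq]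
    exact (hKF ▸ convex_convexHull ℝ F).isConnected hne

/-- Let `v ∈ ℝⁿ \ {0}`, let `D = {0, d₂v, …, d_qv}` be a collinear digit
set, and let `T = pI` with `|p| > 1`.  Let `F = F(T,D)` (the unique nonempty compact set
with `F = ⋃_{d ∈ D} T⁻¹(F + d)`), let `K` be the convex hull of `F` and
`K₁ = ⋃_{d ∈ D} T⁻¹(K + d)`.  Then `F` is connected iff `K = K₁`. -/
theorem stmt1 (n : ℕ) (v : Fin n → ℝ) (hv : v ≠ 0)
    (D : Finset (Fin n → ℝ)) (h0 : (0 : Fin n → ℝ) ∈ D)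
    (hcol : ∀ d ∈ D, ∃ c : ℝ, d = c • v)
    (p : ℝ) (hp : 1 < |p|)
    (F : Set (Fin n → ℝ)) (hne : F.Nonempty) (hcpt : IsCompact F)
    (hfix : F = ⋃ d ∈ D, (fun x => p⁻¹ • (x + d)) '' F) :
    IsConnected F ↔
      convexHull ℝ F = ⋃ d ∈ D, (fun x => p⁻¹ • (x + d)) '' (convexHull ℝ F) :=
  stmt1_general n v D hcol p hp F hne hcpt hfix
end

section
/- If T = 2I or T = −2I (where I is the n×n identity matrix), then for every finite digit set D ⊂ ℤⁿ the attractor F(T,D) is connected. -/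
/-!
The maps `f_d x = ε⁻¹ • (x + d)` are `1/2`-Lipschitz with fixed points `p_d = (ε - 1)⁻¹ • d`.
A closed nonempty set `C` with `f_d '' C ⊆ C` for all `d` contains every bounded `K` with
`K ⊆ ⋃ d, f_d '' K`: the supremum over `K` of the distance to `C` is at most half of itself.

For two digits `v, w`, the line `t ↦ p_v + t • (w - v)` is mapped by `f_v` and `f_w` as
`t ↦ t / ε` and `t ↦ (t + 1) / ε`; for `ε = 2` (resp. `-2`) these two maps cover the parameter
interval `[0, 1]` (resp. `[-2/3, 1/3]`), which contains the parameters `0` and `(ε - 1)⁻¹` of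
`p_v` and `p_w`. So that segment lies in `F`, and all `p_d` lie in one connected component `C`
of `F`. Each `f_d` maps `C` into the component of `f_d p_d = p_d`, i.e. into `C`, and
applying the first paragraph to `K = F` gives `F = C`.
-/

open Set Metric NNReal

theorem LipschitzWith.infEDist_le_mul_of_mapsTo {X : Type*} [PseudoEMetricSpace X] {f : X → X}
    {c : ℝ≥0} {F : Set X} (hf : LipschitzWith c f) (hF : MapsTo f F F) (hFne : F.Nonempty)
    (x : X) : infEDist (f x) F ≤ c * infEDist x F := by
  have hz : ∀ z ∈ F, infEDist (f x) F ≤ c * edist x z := fun z hz =>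
    (infEDist_le_edist_of_mem (hF hz)).trans (hf.edist_le_mul x z)
  rcases eq_or_ne c 0 with rfl | hc
  · obtain ⟨z, hz'⟩ := hFne
    simpa using hz z hz'
  · rw [mul_comm, ← ENNReal.div_le_iff (by exact_mod_cast hc) ENNReal.coe_ne_top, le_infEDist]
    intro z hz'
    rw [ENNReal.div_le_iff (by exact_mod_cast hc) ENNReal.coe_ne_top, mul_comm]
    exact hz z hz'

theorem subset_of_mapsTo_of_subset_biUnion_image {X ι : Type*} [PseudoMetricSpace X]
    {f : ι → X → X} {s : Set ι} {c : ℝ≥0} {F K : Set X} (hc : c < 1)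
    (hf : ∀ i ∈ s, LipschitzWith c (f i)) (hF : IsClosed F) (hFne : F.Nonempty)
    (hFf : ∀ i ∈ s, MapsTo (f i) F F) (hK : Bornology.IsBounded K)
    (hKf : K ⊆ ⋃ i ∈ s, f i '' K) : K ⊆ F := by
  set M := ⨆ x ∈ K, infEDist x F
  have hM_top : M ≠ ⊤ := by
    obtain ⟨q, hq⟩ := hFne
    obtain ⟨r, hr⟩ := hK.subset_closedBall q
    refine ne_top_of_le_ne_top (ENNReal.ofReal_ne_top (r := r)) (iSup₂_le fun x hx => ?_)
    exact (infEDist_le_edist_of_mem hq).trans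
      ((edist_le_ofReal (dist_nonneg.trans (hr hx))).2 (hr hx))
  have hM_le : M ≤ c * M := iSup₂_le fun x hx => by
    obtain ⟨i, hi, y, hy, rfl⟩ : ∃ i ∈ s, ∃ y ∈ K, f i y = x := by simpa using hKf hx
    calc infEDist (f i y) F ≤ c * infEDist y F :=
          (hf i hi).infEDist_le_mul_of_mapsTo (hFf i hi) hFne y
      _ ≤ c * M := by gcongr; exact le_iSup₂ (f := fun x _ => infEDist x F) y hy
  have hM : M = 0 := by
    by_contra hM0
    have := ENNReal.mul_lt_mul_right hM0 hM_top (ENNReal.coe_lt_one_iff.2 hc)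
    rw [mul_one, mul_comm] at this
    exact this.not_ge hM_le
  intro x hx
  rw [← hF.closure_eq, mem_closure_iff_infEDist_zero]
  exact nonpos_iff_eq_zero.1 (hM ▸ le_iSup₂ (f := fun x _ => infEDist x F) x hx)

theorem IsClosed.connectedComponentIn {X : Type*} [TopologicalSpace X] {F : Set X}
    (hF : IsClosed F) (x : X) : IsClosed (connectedComponentIn F x) := by
  by_cases hx : x ∈ F
  · refine closure_subset_iff_isClosed.1 <|
      isPreconnected_connectedComponentIn.closure.subset_connectedComponentIn
        (subset_closure (mem_connectedComponentIn hx)) ?_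
    exact closure_minimal (connectedComponentIn_subset F x) hF
  · rw [connectedComponentIn_eq_empty hx]
    exact isClosed_empty

theorem isConnected_of_fixedPoints_mem_connectedComponentIn {X ι : Type*} [PseudoMetricSpace X]
    {f : ι → X → X} {s : Set ι} {c : ℝ≥0} {F : Set X} {p : ι → X} {i₀ : ι} (hc : c < 1)
    (hf : ∀ i ∈ s, LipschitzWith c (f i)) (hF : IsClosed F) (hFb : Bornology.IsBounded F)
    (hFf : ∀ i ∈ s, MapsTo (f i) F F) (hFs : F ⊆ ⋃ i ∈ s, f i '' F)
    (hfp : ∀ i ∈ s, f i (p i) = p i) (hi₀ : i₀ ∈ s)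
    (hp : ∀ i ∈ s, p i ∈ connectedComponentIn F (p i₀)) : IsConnected F := by
  set C := connectedComponentIn F (p i₀) with hC
  have hCF : C ⊆ F := connectedComponentIn_subset F _
  have hp₀ : p i₀ ∈ F := hCF (hp i₀ hi₀)
  have hCf : ∀ i ∈ s, MapsTo (f i) C C := fun i hi => by
    rw [mapsTo_iff_image_subset, hC, connectedComponentIn_eq (hp i hi)]
    refine (isPreconnected_connectedComponentIn.image _
      (hf i hi).continuous.continuousOn).subset_connectedComponentIn
        ⟨p i, mem_connectedComponentIn (hCF (hp i hi)), hfp i hi⟩ ?_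
    exact image_subset_iff.2 fun x hx => hFf i hi (connectedComponentIn_subset F _ hx)
  have hFC : F ⊆ C := subset_of_mapsTo_of_subset_biUnion_image hc hf (hF.connectedComponentIn _)
    ⟨p i₀, hp i₀ hi₀⟩ hCf hFb hFs
  rw [hFC.antisymm hCF]
  exact isConnected_connectedComponentIn_iff.2 hp₀

theorem nnnorm_inv_lt_one_of_one_lt_abs {ε : ℝ} (hε : 1 < |ε|) : ‖ε⁻¹‖₊ < 1 := by
  rw [← NNReal.coe_lt_coe, coe_nnnorm, norm_inv]
  exact inv_lt_one_of_one_lt₀ hε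

section DigitMap

variable {E : Type*} [NormedAddCommGroup E] [NormedSpace ℝ E]

noncomputable def digitMap (ε : ℝ) (v x : E) : E := ε⁻¹ • (x + v)

theorem lipschitzWith_digitMap (ε : ℝ) (v : E) : LipschitzWith ‖ε⁻¹‖₊ (digitMap ε v) :=
  LipschitzWith.of_dist_le_mul fun x y => by simp [digitMap, dist_smul₀]

variable {ε : ℝ}

theorem digitMap_add_smul (hε₀ : ε ≠ 0) (hε₁ : ε ≠ 1) (v u : E) (r t : ℝ) :
    digitMap ε (v + r • u) ((ε - 1)⁻¹ • v + t • u) = (ε - 1)⁻¹ • v + ((t + r) / ε) • u := by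
  have : ε - 1 ≠ 0 := sub_ne_zero.2 hε₁
  unfold digitMap
  match_scalars
  · field_simp
    ring
  · ring

theorem digitMap_inv_sub_one_smul (hε₀ : ε ≠ 0) (hε₁ : ε ≠ 1) (v : E) :
    digitMap ε v ((ε - 1)⁻¹ • v) = (ε - 1)⁻¹ • v := by
  simpa using digitMap_add_smul hε₀ hε₁ v 0 0 0

theorem inv_sub_one_smul_mem_connectedComponentIn {a b : ℝ} (hε : 1 < |ε|) (ha : 0 ∈ Icc a b)
    (hb : (ε - 1)⁻¹ ∈ Icc a b) (hab : ∀ t ∈ Icc a b, ε * t ∈ Icc a b ∨ ε * t - 1 ∈ Icc a b)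
    {F : Set E} (hF : IsClosed F) (hFne : F.Nonempty) {v w : E}
    (hv : MapsTo (digitMap ε v) F F) (hw : MapsTo (digitMap ε w) F F) :
    (ε - 1)⁻¹ • w ∈ connectedComponentIn F ((ε - 1)⁻¹ • v) := by
  have hε₀ : ε ≠ 0 := by rintro rfl; norm_num at hε
  have hε₁ : ε ≠ 1 := by rintro rfl; norm_num at hε
  set L : ℝ → E := fun t => (ε - 1)⁻¹ • v + t • (w - v) with hL
  have hLv : ∀ t, digitMap ε v (L t) = L (t / ε) := fun t => by
    simpa using digitMap_add_smul hε₀ hε₁ v (w - v) 0 t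
  have hLw : ∀ t, digitMap ε w (L t) = L ((t + 1) / ε) := fun t => by
    simpa using digitMap_add_smul hε₀ hε₁ v (w - v) 1 t
  have hLc : Continuous L := by fun_prop
  have hKF : L '' Icc a b ⊆ F := by
    refine subset_of_mapsTo_of_subset_biUnion_image (s := {v, w}) (c := ‖ε⁻¹‖₊) ?_
      (fun u _ => lipschitzWith_digitMap ε u) hF hFne ?_ (isCompact_Icc.image hLc).isBounded ?_
    · exact nnnorm_inv_lt_one_of_one_lt_abs hε
    · rintro u (rfl | rfl | _) <;> assumption
    · rintro _ ⟨t, ht, rfl⟩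
      simp only [mem_insert_iff, mem_singleton_iff, iUnion_iUnion_eq_or_left, iUnion_iUnion_eq_left,
        mem_union, mem_image]
      rcases hab t ht with h | h
      · exact Or.inl ⟨L (ε * t), mem_image_of_mem L h, by rw [hLv, mul_div_cancel_left₀ _ hε₀]⟩
      · refine Or.inr ⟨L (ε * t - 1), mem_image_of_mem L h, ?_⟩
        rw [hLw, sub_add_cancel, mul_div_cancel_left₀ _ hε₀]
  have h0 : L 0 = (ε - 1)⁻¹ • v := by simp [hL]
  have h1 : L (ε - 1)⁻¹ = (ε - 1)⁻¹ • w := by simp only [hL, smul_sub]; abel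
  rw [← h0, ← h1]
  exact (isPreconnected_Icc.image L hLc.continuousOn).subset_connectedComponentIn
    (mem_image_of_mem L ha) hKF (mem_image_of_mem L hb)

end DigitMap

theorem exists_Icc_of_eq_two_or_eq_neg_two {ε : ℝ} (hε : ε = 2 ∨ ε = -2) :
    ∃ a b : ℝ, 0 ∈ Icc a b ∧ (ε - 1)⁻¹ ∈ Icc a b ∧
      ∀ t ∈ Icc a b, ε * t ∈ Icc a b ∨ ε * t - 1 ∈ Icc a b := by
  rcases hε with rfl | rfl
  · refine ⟨0, 1, by norm_num, by norm_num, fun t ⟨h₁, h₂⟩ => ?_⟩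
    rcases le_or_gt t (1 / 2) with h | h
    · exact Or.inl ⟨by linarith, by linarith⟩
    · exact Or.inr ⟨by linarith, by linarith⟩
  · refine ⟨-2 / 3, 1 / 3, by norm_num, by norm_num, fun t ⟨h₁, h₂⟩ => ?_⟩
    rcases le_or_gt (-1 / 6) t with h | h
    · exact Or.inl ⟨by linarith, by linarith⟩
    · exact Or.inr ⟨by linarith, by linarith⟩

/-- If `T = 2I` or `T = -2I` (so that `T⁻¹(x + d) = ε⁻¹ • (x + d)` with
`ε = 2` or `ε = -2`), then for every finite digit set `D ⊂ ℤⁿ` the attractor `F(T,D)`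
(the unique nonempty compact set with `F = ⋃_{d ∈ D} T⁻¹(F + d)`) is connected. -/
theorem stmt2 (n : ℕ) (ε : ℝ) (hε : ε = 2 ∨ ε = -2)
    (D : Finset (Fin n → ℤ)) (hD : D.Nonempty)
    (F : Set (Fin n → ℝ)) (hne : F.Nonempty) (hcpt : IsCompact F)
    (hfix : F = ⋃ d ∈ D, (fun x => ε⁻¹ • (x + fun i => ((d i : ℝ)))) '' F) :
    IsConnected F := by
  let v : (Fin n → ℤ) → Fin n → ℝ := fun d i => d i
  have habs : 1 < |ε| := by rcases hε with rfl | rfl <;> norm_num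
  have hε₀ : ε ≠ 0 := by rcases hε with rfl | rfl <;> norm_num
  have hε₁ : ε ≠ 1 := by rcases hε with rfl | rfl <;> norm_num
  obtain ⟨a, b, ha, hb, hab⟩ := exists_Icc_of_eq_two_or_eq_neg_two hε
  obtain ⟨d₀, hd₀⟩ := hD
  have hmaps : ∀ d ∈ (D : Set (Fin n → ℤ)), MapsTo (digitMap ε (v d)) F F := fun d hd x hx => by
    rw [hfix]
    exact mem_biUnion hd (mem_image_of_mem _ hx)
  exact isConnected_of_fixedPoints_mem_connectedComponentIn (i₀ := d₀)
    (p := fun d => (ε - 1)⁻¹ • v d) (nnnorm_inv_lt_one_of_one_lt_abs habs)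
    (fun d _ => lipschitzWith_digitMap ε (v d)) hcpt.isClosed hcpt.isBounded hmaps hfix.subset
    (fun d _ => digitMap_inv_sub_one_smul hε₀ hε₁ (v d)) hd₀
    fun d hd => inv_sub_one_smul_mem_connectedComponentIn habs ha hb hab hcpt.isClosed hne
      (hmaps d₀ hd₀) (hmaps d hd)
end

section
/- Let T be the 2×2 integer matrix with entries T₁₁ = n, T₁₂ = 0, T₂₁ = t, T₂₂ = m, where |n| ≥ |m| ≥ 2 and t ∈ {0,1}. Let D ⊆ S with q = #D ≥ 2, and assume D is not eigen-collinear. Let r = #{ j : (i,j)ᵀ ∈ D for some i }. If q ≤ |m| and log_{|m|} r + log_{|n|}(q/r) ≠ log_{|m|} q, then F(T,D) is disconnected. -/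
/-!
Since `T` is lower triangular, the projection `A` of `F` to the first coordinate satisfies
`A = ⋃_{d ∈ D} n⁻¹ (A + d 0)`. The logarithmic condition fails both when `|m| = |n|` and when
`r = q`, so `q ≤ |m| < |n|`, which makes `A` Lebesgue null, and two digits of `D` have distinct
first coordinates, which makes `A` contain two points. A connected null subset of `ℝ` has at
most one point, so `A`, and hence `F`, is disconnected.
-/

open Matrix

/-- The canonical cast of an integer vector to a real vector. -/
def castVec {k : ℕ} (d : Fin k → ℤ) : Fin k → ℝ := fun i => (d i : ℝ)

/-- The lower triangular matrix `[[n, 0], [t, m]]`, as a real matrix. -/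
noncomputable def Tmat (n t m : ℤ) : Matrix (Fin 2) (Fin 2) ℝ :=
  !![(n : ℝ), 0; (t : ℝ), (m : ℝ)]

/-- `d` belongs to `S = {(i,j)ᵀ : 0 ≤ i ≤ |n|-1, 0 ≤ j ≤ |m|-1}`. -/
def InS (n m : ℤ) (d : Fin 2 → ℤ) : Prop :=
  0 ≤ d 0 ∧ d 0 ≤ |n| - 1 ∧ 0 ≤ d 1 ∧ d 1 ≤ |m| - 1

/-- `D` is eigen-collinear for `M`: there are an eigenvector `v` of `M` and `d₀ ∈ D`
with `D - d₀ ⊆ ℝv`. -/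
def EigenCollinear (M : Matrix (Fin 2) (Fin 2) ℝ) (D : Finset (Fin 2 → ℤ)) : Prop :=
  ∃ v : Fin 2 → ℝ, v ≠ 0 ∧ (∃ μ : ℝ, M *ᵥ v = μ • v) ∧
    ∃ d₀ ∈ D, ∀ d ∈ D, ∃ c : ℝ, castVec d - castVec d₀ = c • v

open MeasureTheory Set
open scoped ENNReal

namespace MeasureTheory

theorem measure_eq_zero_of_subset_biUnion_image {α ι : Type*} [MeasurableSpace α]
    {μ : Measure α} {A : Set α} (hA : μ A ≠ ∞) {I : Finset ι} {f : ι → α → α} {ρ : ℝ≥0∞}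
    (hf : ∀ i ∈ I, μ (f i '' A) ≤ ρ * μ A) (hρ : I.card * ρ < 1)
    (hcover : A ⊆ ⋃ i ∈ I, f i '' A) : μ A = 0 := by
  by_contra hA0
  have : μ A < μ A :=
    calc μ A ≤ ∑ i ∈ I, μ (f i '' A) := (measure_mono hcover).trans (measure_biUnion_finset_le _ _)
      _ ≤ ∑ _i ∈ I, ρ * μ A := Finset.sum_le_sum hf
      _ = I.card * ρ * μ A := by rw [Finset.sum_const, nsmul_eq_mul, mul_assoc]
      _ < 1 * μ A := ENNReal.mul_lt_mul_left hA0 hA hρ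
      _ = μ A := one_mul _
  exact this.false

variable {E : Type*} [NormedAddCommGroup E] [NormedSpace ℝ E] [MeasurableSpace E] [BorelSpace E]
  [FiniteDimensional ℝ E] (μ : Measure E) [μ.IsAddHaarMeasure]

theorem Measure.addHaar_image_smul_add (c : ℝ) (w : E) (s : Set E) :
    μ ((fun y => c • y + w) '' s) = ENNReal.ofReal (|c| ^ Module.finrank ℝ E) * μ s := by
  rw [← image_image (· + w) (c • ·), image_smul, image_add_right, measure_preimage_add_right,
    Measure.addHaar_smul, abs_pow]

theorem Measure.addHaar_eq_zero_of_subset_biUnion_smul_add {ι : Type*} {A : Set E}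
    (hA : μ A ≠ ∞) {I : Finset ι} {c : ℝ} {w : ι → E}
    (hc : I.card * |c| ^ Module.finrank ℝ E < 1)
    (hcover : A ⊆ ⋃ i ∈ I, (fun y => c • y + w i) '' A) : μ A = 0 := by
  refine measure_eq_zero_of_subset_biUnion_image hA
    (fun i _ => (Measure.addHaar_image_smul_add μ c (w i) A).le) ?_ hcover
  rw [← ENNReal.ofReal_natCast, ← ENNReal.ofReal_mul (Nat.cast_nonneg _)]
  exact ENNReal.ofReal_lt_one.mpr hc

end MeasureTheory

theorem IsPreconnected.subsingleton_of_volume_eq_zero {A : Set ℝ} (hA : IsPreconnected A)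
    (h0 : volume A = 0) : A.Subsingleton := by
  intro a ha b hb
  by_contra hab
  wlog hlt : a < b generalizing a b
  · exact this hb ha (Ne.symm hab) ((Ne.symm hab).lt_of_le (not_lt.mp hlt))
  have : volume (Icc a b) = 0 := measure_mono_null (hA.Icc_subset ha hb) h0
  rw [Real.volume_Icc, ENNReal.ofReal_eq_zero] at this
  linarith

theorem Real.ne_and_ne_of_logb_add_logb_div_ne {b b' r q : ℝ} (hr : r ≠ 0) (hq : q ≠ 0)
    (h : Real.logb b r + Real.logb b' (q / r) ≠ Real.logb b q) : b ≠ b' ∧ r ≠ q := by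
  constructor
  · rintro rfl
    rw [← Real.logb_mul hr (div_ne_zero hq hr), mul_div_cancel₀ _ hr] at h
    exact h rfl
  · rintro rfl
    rw [div_self hr, Real.logb_one, add_zero] at h
    exact h rfl

theorem Finset.exists_apply_zero_ne_of_card_image_apply_one_lt {α : Type*} [DecidableEq α]
    {D : Finset (Fin 2 → α)} (h : (D.image fun d => d 1).card < D.card) :
    ∃ d ∈ D, ∃ d' ∈ D, d 0 ≠ d' 0 := by
  by_contra! hconst
  refine h.ne (Finset.card_image_of_injOn fun d hd d' hd' h1 => ?_)
  exact funext (Fin.forall_fin_two.mpr ⟨hconst d hd d' hd', h1⟩)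

theorem Set.nontrivial_of_image_add_subset {E : Type*} [AddLeftCancelMonoid E] {A : Set E}
    (hA : A.Nonempty) (g : E → E) {u v : E} (huv : u ≠ v) (hu : (fun y => g y + u) '' A ⊆ A)
    (hv : (fun y => g y + v) '' A ⊆ A) : A.Nontrivial := by
  obtain ⟨a, ha⟩ := hA
  exact ⟨_, hu (mem_image_of_mem _ ha), _, hv (mem_image_of_mem _ ha),
    fun h => huv (add_left_cancel h)⟩

theorem Tmat_inv_mulVec_zero {n m : ℤ} (t : ℤ) (hn : n ≠ 0) (hm : m ≠ 0) (z : Fin 2 → ℝ) :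
    ((Tmat n t m)⁻¹ *ᵥ z) 0 = (n : ℝ)⁻¹ * z 0 := by
  have hdet : IsUnit (Tmat n t m).det := by simp [Tmat, Matrix.det_fin_two_of, hn, hm]
  set w := (Tmat n t m)⁻¹ *ᵥ z
  have hTw : Tmat n t m *ᵥ w = z := by
    rw [Matrix.mulVec_mulVec, Matrix.mul_nonsing_inv _ hdet, Matrix.one_mulVec]
  have h0 : (n : ℝ) * w 0 = z 0 := by
    rw [← hTw]
    simp [Tmat, Matrix.mulVec, dotProduct, Fin.sum_univ_two]
  rw [← h0, inv_mul_cancel_left₀ (Int.cast_ne_zero.mpr hn)]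

theorem image_eval_zero_eq_biUnion_of_attractor {n m t : ℤ} (hn : n ≠ 0) (hm : m ≠ 0)
    {D : Finset (Fin 2 → ℤ)} {F : Set (Fin 2 → ℝ)}
    (hfix : F = ⋃ d ∈ D, (fun x => (Tmat n t m)⁻¹ *ᵥ (x + castVec d)) '' F) :
    (fun x => x 0) '' F =
      ⋃ d ∈ D, (fun a : ℝ => (n : ℝ)⁻¹ • a + (n : ℝ)⁻¹ * d 0) '' ((fun x => x 0) '' F) := by
  conv_lhs => rw [hfix]
  simp only [image_iUnion₂, image_image, Tmat_inv_mulVec_zero t hn hm, castVec, Pi.add_apply,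
    smul_eq_mul, mul_add]

theorem stmt3_general (n m t : ℤ) (hnm : |m| ≤ |n|)
    (D : Finset (Fin 2 → ℤ))
    (F : Set (Fin 2 → ℝ)) (hcpt : IsCompact F)
    (hfix : F = ⋃ d ∈ D, (fun x => (Tmat n t m)⁻¹ *ᵥ (x + castVec d)) '' F)
    (r : ℕ) (hr : r = (D.image fun d => d 1).card)
    (hqm : (D.card : ℤ) ≤ |m|)
    (hlog : Real.logb ((|m| : ℤ) : ℝ) (r : ℝ) +
        Real.logb ((|n| : ℤ) : ℝ) ((D.card : ℝ) / (r : ℝ)) ≠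
      Real.logb ((|m| : ℤ) : ℝ) (D.card : ℝ)) :
    ¬ IsConnected F := by
  intro hconn
  obtain ⟨d₀, hd₀, -⟩ := nonempty_biUnion.mp (hfix ▸ hconn.nonempty)
  have hq0 : 0 < D.card := Finset.card_pos.mpr ⟨d₀, hd₀⟩
  have hr0 : 0 < r := hr ▸ (Finset.image_nonempty.mpr ⟨d₀, hd₀⟩).card_pos
  have hm : m ≠ 0 := by
    rintro rfl
    rw [abs_zero] at hqm
    omega
  have hn : n ≠ 0 := fun hn => hm (abs_nonpos_iff.mp (hnm.trans (by rw [hn, abs_zero])))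
  obtain ⟨hmn, hrq⟩ := Real.ne_and_ne_of_logb_add_logb_div_ne
    (Nat.cast_ne_zero.mpr hr0.ne') (Nat.cast_ne_zero.mpr hq0.ne') hlog
  replace hmn : |m| < |n| := hnm.lt_of_ne (by exact_mod_cast hmn)
  replace hrq : r < D.card := (hr ▸ Finset.card_image_le).lt_of_ne (by exact_mod_cast hrq)
  obtain ⟨d, hd, d', hd', hdd'⟩ := Finset.exists_apply_zero_ne_of_card_image_apply_one_lt (hr ▸ hrq)
  set A := (fun x : Fin 2 → ℝ => x 0) '' F
  have hA : A = _ := image_eval_zero_eq_biUnion_of_attractor hn hm hfix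
  have hn' : (n : ℝ)⁻¹ ≠ 0 := inv_ne_zero (Int.cast_ne_zero.mpr hn)
  have hA0 : volume A = 0 := by
    refine Measure.addHaar_eq_zero_of_subset_biUnion_smul_add volume
      (hcpt.image (continuous_apply 0)).measure_lt_top.ne ?_ hA.le
    rw [Module.finrank_self, pow_one, abs_inv, ← div_eq_mul_inv,
      div_lt_one (abs_pos.mpr (Int.cast_ne_zero.mpr hn)), ← Int.cast_abs]
    exact_mod_cast hqm.trans_lt hmn
  have hAnt : A.Nontrivial := Set.nontrivial_of_image_add_subset (hconn.nonempty.image _) _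
    (by simpa [hn'] using hdd') ((subset_biUnion_of_mem hd).trans hA.ge)
    ((subset_biUnion_of_mem hd').trans hA.ge)
  exact not_nontrivial_iff.mpr ((hconn.image _ (continuous_apply 0).continuousOn).isPreconnected
    |>.subsingleton_of_volume_eq_zero hA0) hAnt

/-- For `T = [[n,0],[t,m]]` with `|n| ≥ |m| ≥ 2` and `t ∈ {0,1}`,
`D ⊆ S` with `q = #D ≥ 2` not eigen-collinear, and `r` the number of second coordinates
occurring in `D`: if `q ≤ |m|` and `log_{|m|} r + log_{|n|}(q/r) ≠ log_{|m|} q`, then the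
attractor `F(T,D)` (the unique nonempty compact set with `F = ⋃_{d ∈ D} T⁻¹(F + d)`) is
disconnected. -/
theorem stmt3 (n m t : ℤ) (hnm : |m| ≤ |n|) (hm : 2 ≤ |m|) (ht : t = 0 ∨ t = 1)
    (D : Finset (Fin 2 → ℤ)) (hDS : ∀ d ∈ D, InS n m d) (hq : 2 ≤ D.card)
    (hec : ¬ EigenCollinear (Tmat n t m) D)
    (F : Set (Fin 2 → ℝ)) (hne : F.Nonempty) (hcpt : IsCompact F)
    (hfix : F = ⋃ d ∈ D, (fun x => (Tmat n t m)⁻¹ *ᵥ (x + castVec d)) '' F)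
    (r : ℕ) (hr : r = (D.image fun d => d 1).card)
    (hqm : (D.card : ℤ) ≤ |m|)
    (hlog : Real.logb ((|m| : ℤ) : ℝ) (r : ℝ) +
        Real.logb ((|n| : ℤ) : ℝ) ((D.card : ℝ) / (r : ℝ)) ≠
      Real.logb ((|m| : ℤ) : ℝ) (D.card : ℝ)) :
    ¬ IsConnected F :=
  stmt3_general n m t hnm D F hcpt hfix r hr hqm hlog
end

section
/- Let T be the 2×2 integer matrix with entries T₁₁ = n, T₁₂ = 0, T₂₁ = 0, T₂₂ = m, where n ≥ m ≥ 2, and let D ⊆ S be a digit set with #D ≥ 2 which is not eigen-collinear. Set b₁ = (n−1, 0)ᵀ, b₂ = (0, m−1)ᵀ, b₃ = (n−1, m−1)ᵀ. If none of b₁, b₂, b₃, b₁ − b₂ belongs to ΔD, then F(T,D) is disconnected. -/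
/-!
Each coordinate of a point of `F` lies in `[0, 1]`: at a point `z ∈ F` maximizing `z₀`, the
relation `n z₀ = x₀ + d₀` with `x ∈ F`, `d₀ ≤ n - 1` forces `z₀ ≤ 1`, and similarly at a minimum.
Hence two pieces `T⁻¹(F + d)` and `T⁻¹(F + e)` can only meet if `F` meets `F + g` for some
`g = e - d ∈ {-1, 0, 1}² \ {0}`. Applying `T` turns such a meeting into one for `T g - δ` with
`δ ∈ ΔD`, and this again has to lie in `{-1, 0, 1}²`. For `g = (1, ±1)` this pins `δ` down to `b₃`
or `b₁ - b₂`; for `g = (1, 0)` and `(0, 1)` it pins `δ` down to `b₁`, `b₂` or reduces to the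
diagonal cases. So the `#D ≥ 2` pieces are pairwise disjoint compact sets and `F` is disconnected.
-/

open Matrix

/-- `a ∈ ΔD = D - D`. -/
def InDelta (D : Finset (Fin 2 → ℤ)) (a : Fin 2 → ℤ) : Prop :=
  ∃ d ∈ D, ∃ d' ∈ D, a = d - d'

theorem IsCompact.mem_Icc_of_forall_exists_mul_eq_add {X : Type*} [TopologicalSpace X]
    {F : Set X} (hF : IsCompact F) {g : X → ℝ} (hg : ContinuousOn g F) {c : ℝ} (hc : 1 < c)
    (hstep : ∀ x ∈ F, ∃ y ∈ F, ∃ r ∈ Set.Icc 0 (c - 1), c * g x = g y + r) :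
    ∀ x ∈ F, g x ∈ Set.Icc 0 1 := by
  intro x hx
  obtain ⟨u, huF, humin⟩ := hF.exists_isMinOn ⟨x, hx⟩ hg
  obtain ⟨v, hvF, hvmax⟩ := hF.exists_isMaxOn ⟨x, hx⟩ hg
  obtain ⟨u', hu', r, ⟨hr, -⟩, hu⟩ := hstep u huF
  obtain ⟨v', hv', s, ⟨-, hs⟩, hv⟩ := hstep v hvF
  have hu'min := isMinOn_iff.mp humin u' hu'
  have hv'max := isMaxOn_iff.mp hvmax v' hv'
  have hxmin := isMinOn_iff.mp humin x hx
  have hxmax := isMaxOn_iff.mp hvmax x hx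
  constructor <;> nlinarith

theorem not_isPreconnected_biUnion_of_pairwiseDisjoint {ι X : Type*} [TopologicalSpace X]
    {s : Finset ι} {K : ι → Set X} (hs : 1 < s.card) (hK : ∀ i ∈ s, IsClosed (K i))
    (hne : ∀ i ∈ s, (K i).Nonempty) (hdisj : (s : Set ι).PairwiseDisjoint K) :
    ¬ IsPreconnected (⋃ i ∈ s, K i) := by
  classical
  obtain ⟨i, hi, j, hj, hij⟩ := Finset.one_lt_card.mp hs
  have hsplit : ⋃ k ∈ s, K k = K i ∪ ⋃ k ∈ s.erase i, K k := by
    rw [← Finset.set_biUnion_insert, Finset.insert_erase hi]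
  have hdisj' : Disjoint (K i) (⋃ k ∈ s.erase i, K k) := by
    refine Set.disjoint_iUnion₂_right.mpr fun k hk => ?_
    exact hdisj hi (Finset.mem_of_mem_erase hk) (Finset.ne_of_mem_erase hk).symm
  intro hpre
  rw [isPreconnected_iff_subset_of_disjoint_closed] at hpre
  rcases hpre _ _ (hK i hi) (isClosed_biUnion_finset fun k hk => hK k (Finset.mem_of_mem_erase hk))
    hsplit.le (by rw [hdisj'.inter_eq, Set.inter_empty]) with h | h
  · obtain ⟨z, hz⟩ := hne j hj
    exact Set.disjoint_left.mp (hdisj hi hj hij) (h (Set.mem_biUnion hj hz)) hz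
  · obtain ⟨z, hz⟩ := hne i hi
    exact Set.disjoint_left.mp hdisj' hz (h (Set.mem_biUnion hi hz))

theorem abs_le_of_inDelta {n m : ℤ} {D : Finset (Fin 2 → ℤ)} (hDS : ∀ d ∈ D, InS n m d)
    {a b : ℤ} (h : InDelta D ![a, b]) : |a| ≤ |n| - 1 ∧ |b| ≤ |m| - 1 := by
  obtain ⟨d, hd, e, he, hde⟩ := h
  have ha : a = d 0 - e 0 := by simpa using congrFun hde 0
  have hb : b = d 1 - e 1 := by simpa using congrFun hde 1
  have hd' := hDS d hd
  have he' := hDS e he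
  unfold InS at hd' he'
  simp only [abs_le]
  omega

theorem eq_zero_of_abs_le_one_of_step {n m : ℤ} {D : Finset (Fin 2 → ℤ)}
    {P : ℤ → ℤ → Prop}
    (hdelta : ∀ a b, InDelta D ![a, b] → |a| ≤ n - 1 ∧ |b| ≤ m - 1)
    (hb1 : ¬ InDelta D ![n - 1, 0]) (hb2 : ¬ InDelta D ![0, m - 1])
    (hb3 : ¬ InDelta D ![n - 1, m - 1]) (hb12 : ¬ InDelta D ![n - 1, -(m - 1)])
    (hbound : ∀ p q, P p q → |p| ≤ 1 ∧ |q| ≤ 1) (hneg : ∀ p q, P p q → P (-p) (-q))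
    (hstep : ∀ p q, P p q → ∃ a b p' q', InDelta D ![a, b] ∧ P p' q' ∧
      n * p = p' + a ∧ m * q = q' + b)
    {p q : ℤ} (hpq : P p q) : p = 0 ∧ q = 0 := by
  have step : ∀ p q, P p q → ∃ a b p' q', InDelta D ![a, b] ∧ P p' q' ∧
      n * p = p' + a ∧ m * q = q' + b ∧ (-(n - 1) ≤ a ∧ a ≤ n - 1) ∧ (-(m - 1) ≤ b ∧ b ≤ m - 1) ∧
      (-1 ≤ p' ∧ p' ≤ 1) ∧ (-1 ≤ q' ∧ q' ≤ 1) := fun p q h => by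
    obtain ⟨a, b, p', q', hab, h', hp, hq⟩ := hstep p q h
    exact ⟨a, b, p', q', hab, h', hp, hq, abs_le.mp (hdelta a b hab).1,
      abs_le.mp (hdelta a b hab).2, abs_le.mp (hbound p' q' h').1, abs_le.mp (hbound p' q' h').2⟩
  have h11 : ¬ P 1 1 := fun h => by
    obtain ⟨a, b, p', q', hab, -, hp, hq, ha, hb, hp', hq'⟩ := step 1 1 h
    obtain rfl : a = n - 1 := by omega
    obtain rfl : b = m - 1 := by omega
    exact hb3 hab
  have h1m1 : ¬ P 1 (-1) := fun h => by
    obtain ⟨a, b, p', q', hab, -, hp, hq, ha, hb, hp', hq'⟩ := step 1 (-1) h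
    obtain rfl : a = n - 1 := by omega
    obtain rfl : b = -(m - 1) := by omega
    exact hb12 hab
  have h10 : ¬ P 1 0 := fun h => by
    obtain ⟨a, b, p', q', hab, h', hp, hq, ha, hb, hp', hq'⟩ := step 1 0 h
    obtain rfl : a = n - 1 := by omega
    obtain rfl : p' = 1 := by omega
    rcases (by omega : q' = -1 ∨ q' = 0 ∨ q' = 1) with rfl | rfl | rfl
    · exact h1m1 h'
    · obtain rfl : b = 0 := by omega
      exact hb1 hab
    · exact h11 h'
  have h01 : ¬ P 0 1 := fun h => by
    obtain ⟨a, b, p', q', hab, h', hp, hq, ha, hb, hp', hq'⟩ := step 0 1 h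
    obtain rfl : b = m - 1 := by omega
    obtain rfl : q' = 1 := by omega
    rcases (by omega : p' = -1 ∨ p' = 0 ∨ p' = 1) with rfl | rfl | rfl
    · exact h1m1 (by simpa using hneg _ _ h')
    · obtain rfl : a = 0 := by omega
      exact hb2 hab
    · exact h11 h'
  obtain ⟨hp, hq⟩ := hbound p q hpq
  rw [abs_le] at hp hq
  rcases (by omega : p = -1 ∨ p = 0 ∨ p = 1) with rfl | rfl | rfl <;>
  rcases (by omega : q = -1 ∨ q = 0 ∨ q = 1) with rfl | rfl | rfl
  all_goals first
    | exact ⟨rfl, rfl⟩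
    | exact absurd hpq ‹_›
    | exact absurd (by simpa using hneg _ _ hpq) ‹_›

theorem Tmat_mulVec (n m : ℤ) (w : Fin 2 → ℝ) : Tmat n 0 m *ᵥ w = ![n * w 0, m * w 1] := by
  ext i; fin_cases i <;> simp [Tmat, mulVec, dotProduct, Fin.sum_univ_two]

theorem Tmat_inv_mulVec {n m : ℤ} (hn : n ≠ 0) (hm : m ≠ 0) (w : Fin 2 → ℝ) :
    (Tmat n 0 m)⁻¹ *ᵥ w = ![w 0 / n, w 1 / m] := by
  have hn' : (n : ℝ) ≠ 0 := by exact_mod_cast hn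
  have hm' : (m : ℝ) ≠ 0 := by exact_mod_cast hm
  have hdet : IsUnit (Tmat n 0 m).det := by
    simp [Tmat, det_fin_two_of, hn', hm']
  have hw : w = Tmat n 0 m *ᵥ ![w 0 / n, w 1 / m] := by
    rw [Tmat_mulVec]
    ext i; fin_cases i
    · exact (mul_div_cancel₀ _ hn').symm
    · exact (mul_div_cancel₀ _ hm').symm
  conv_lhs => rw [hw, mulVec_mulVec, nonsing_inv_mul _ hdet, one_mulVec]

def IsNeighbor (F : Set (Fin 2 → ℝ)) (p q : ℤ) : Prop :=
  ∃ x ∈ F, ∃ y ∈ F, x 0 - y 0 = p ∧ x 1 - y 1 = q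

theorem IsNeighbor.neg {F : Set (Fin 2 → ℝ)} {p q : ℤ} (h : IsNeighbor F p q) :
    IsNeighbor F (-p) (-q) := by
  obtain ⟨x, hx, y, hy, hp, hq⟩ := h
  exact ⟨y, hy, x, hx, by push_cast; linarith, by push_cast; linarith⟩

theorem IsNeighbor.abs_le_one {F : Set (Fin 2 → ℝ)}
    (hF : ∀ z ∈ F, z 0 ∈ Set.Icc 0 1 ∧ z 1 ∈ Set.Icc 0 1) {p q : ℤ} (h : IsNeighbor F p q) :
    |p| ≤ 1 ∧ |q| ≤ 1 := by
  obtain ⟨x, hx, y, hy, hp, hq⟩ := h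
  obtain ⟨⟨hx0, hx0'⟩, hx1, hx1'⟩ := hF x hx
  obtain ⟨⟨hy0, hy0'⟩, hy1, hy1'⟩ := hF y hy
  have hp' : |(p : ℝ)| ≤ 1 := abs_le.mpr ⟨by linarith, by linarith⟩
  have hq' : |(q : ℝ)| ≤ 1 := abs_le.mpr ⟨by linarith, by linarith⟩
  exact ⟨by exact_mod_cast hp', by exact_mod_cast hq'⟩

section Attractor

variable {n m : ℤ} {D : Finset (Fin 2 → ℤ)} {F : Set (Fin 2 → ℝ)}

theorem exists_digit_of_mem_attractor (hn : n ≠ 0) (hm : m ≠ 0)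
    (hfix : F = ⋃ d ∈ D, (fun x => (Tmat n 0 m)⁻¹ *ᵥ (x + castVec d)) '' F)
    {z : Fin 2 → ℝ} (hz : z ∈ F) :
    ∃ x ∈ F, ∃ d ∈ D, (n : ℝ) * z 0 = x 0 + d 0 ∧ (m : ℝ) * z 1 = x 1 + d 1 := by
  rw [hfix] at hz
  simp only [Set.mem_iUnion, Set.mem_image, Tmat_inv_mulVec hn hm] at hz
  obtain ⟨d, hd, x, hx, rfl⟩ := hz
  exact ⟨x, hx, d, hd, mul_div_cancel₀ _ (by exact_mod_cast hn),
    mul_div_cancel₀ _ (by exact_mod_cast hm)⟩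

theorem mem_Icc_of_mem_attractor (hn : 1 < n) (hm : 1 < m) (hDS : ∀ d ∈ D, InS n m d)
    (hcpt : IsCompact F)
    (hfix : F = ⋃ d ∈ D, (fun x => (Tmat n 0 m)⁻¹ *ᵥ (x + castVec d)) '' F)
    {z : Fin 2 → ℝ} (hz : z ∈ F) : z 0 ∈ Set.Icc 0 1 ∧ z 1 ∈ Set.Icc 0 1 := by
  have hdigit : ∀ d ∈ D, ((d 0 : ℤ) : ℝ) ∈ Set.Icc 0 ((n : ℝ) - 1) ∧
      ((d 1 : ℤ) : ℝ) ∈ Set.Icc 0 ((m : ℝ) - 1) := by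
    intro d hd
    obtain ⟨h0, h0', h1, h1'⟩ := hDS d hd
    rw [abs_of_pos (by omega)] at h0' h1'
    exact ⟨⟨by exact_mod_cast h0, by exact_mod_cast h0'⟩, by exact_mod_cast h1,
      by exact_mod_cast h1'⟩
  have hstep := fun z (hz : z ∈ F) => exists_digit_of_mem_attractor (by omega) (by omega) hfix hz
  constructor
  · refine hcpt.mem_Icc_of_forall_exists_mul_eq_add (continuous_apply 0).continuousOn
      (c := n) (by exact_mod_cast hn) (fun z hz => ?_) z hz
    obtain ⟨x, hx, d, hd, h0, -⟩ := hstep z hz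
    exact ⟨x, hx, d 0, (hdigit d hd).1, h0⟩
  · refine hcpt.mem_Icc_of_forall_exists_mul_eq_add (continuous_apply 1).continuousOn
      (c := m) (by exact_mod_cast hm) (fun z hz => ?_) z hz
    obtain ⟨x, hx, d, hd, -, h1⟩ := hstep z hz
    exact ⟨x, hx, d 1, (hdigit d hd).2, h1⟩

theorem IsNeighbor.exists_inDelta (hn : n ≠ 0) (hm : m ≠ 0)
    (hfix : F = ⋃ d ∈ D, (fun x => (Tmat n 0 m)⁻¹ *ᵥ (x + castVec d)) '' F)
    {p q : ℤ} (h : IsNeighbor F p q) :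
    ∃ a b p' q', InDelta D ![a, b] ∧ IsNeighbor F p' q' ∧ n * p = p' + a ∧ m * q = q' + b := by
  obtain ⟨x, hx, y, hy, hp, hq⟩ := h
  obtain ⟨x', hx', d, hd, hx0, hx1⟩ := exists_digit_of_mem_attractor hn hm hfix hx
  obtain ⟨y', hy', e, he, hy0, hy1⟩ := exists_digit_of_mem_attractor hn hm hfix hy
  refine ⟨d 0 - e 0, d 1 - e 1, n * p - (d 0 - e 0), m * q - (d 1 - e 1),
    ⟨d, hd, e, he, ?_⟩, ⟨x', hx', y', hy', ?_, ?_⟩, by ring, by ring⟩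
  · ext i; fin_cases i <;> simp
  · push_cast; linear_combination (n : ℝ) * hp - hx0 + hy0
  · push_cast; linear_combination (m : ℝ) * hq - hx1 + hy1

theorem pairwiseDisjoint_pieces_of_isNeighbor (hn : n ≠ 0) (hm : m ≠ 0)
    (hnbr : ∀ p q, IsNeighbor F p q → p = 0 ∧ q = 0) :
    (D : Set (Fin 2 → ℤ)).PairwiseDisjoint
      fun d => (fun x => (Tmat n 0 m)⁻¹ *ᵥ (x + castVec d)) '' F := by
  intro d _ e _ hde
  refine Set.disjoint_left.mpr ?_
  rintro _ ⟨x, hx, rfl⟩ ⟨y, hy, hxy⟩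
  simp only [Tmat_inv_mulVec hn hm] at hxy
  have hn' : (n : ℝ) ≠ 0 := by exact_mod_cast hn
  have hm' : (m : ℝ) ≠ 0 := by exact_mod_cast hm
  have h0 := congrFun hxy 0
  have h1 := congrFun hxy 1
  simp only [Matrix.cons_val_zero, Matrix.cons_val_one, Pi.add_apply, castVec,
    div_left_inj' hn', div_left_inj' hm'] at h0 h1
  obtain ⟨hp, hq⟩ := hnbr (e 0 - d 0) (e 1 - d 1)
    ⟨x, hx, y, hy, by push_cast; linarith, by push_cast; linarith⟩
  exact hde (funext fun i => by fin_cases i <;> simp only [Fin.zero_eta, Fin.mk_one] <;> omega)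

end Attractor

theorem stmt7_general (n m : ℤ) (hnm : m ≤ n) (hm : 2 ≤ m)
    (D : Finset (Fin 2 → ℤ)) (hDS : ∀ d ∈ D, InS n m d) (hq : 2 ≤ D.card)
    (F : Set (Fin 2 → ℝ)) (hne : F.Nonempty) (hcpt : IsCompact F)
    (hfix : F = ⋃ d ∈ D, (fun x => (Tmat n 0 m)⁻¹ *ᵥ (x + castVec d)) '' F)
    (hb1 : ¬ InDelta D ![n - 1, 0]) (hb2 : ¬ InDelta D ![0, m - 1])
    (hb3 : ¬ InDelta D ![n - 1, m - 1])
    (hb12 : ¬ InDelta D (![n - 1, 0] - ![0, m - 1])) :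
    ¬ IsConnected F := by
  have hn0 : n ≠ 0 := by omega
  have hm0 : m ≠ 0 := by omega
  have hdelta : ∀ a b, InDelta D ![a, b] → |a| ≤ n - 1 ∧ |b| ≤ m - 1 := fun a b h => by
    simpa only [abs_of_pos (by omega : 0 < n), abs_of_pos (by omega : 0 < m)] using
      abs_le_of_inDelta hDS h
  have hsquare := fun z (hz : z ∈ F) =>
    mem_Icc_of_mem_attractor (by omega) (by omega) hDS hcpt hfix hz
  have hnbr : ∀ p q, IsNeighbor F p q → p = 0 ∧ q = 0 := fun p q =>
    eq_zero_of_abs_le_one_of_step hdelta hb1 hb2 hb3 (by simpa using hb12)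
      (fun _ _ h => h.abs_le_one hsquare) (fun _ _ h => h.neg)
      (fun _ _ h => h.exists_inDelta hn0 hm0 hfix)
  have hpieces_closed : ∀ d ∈ D, IsClosed ((fun x => (Tmat n 0 m)⁻¹ *ᵥ (x + castVec d)) '' F) :=
    fun d _ => (hcpt.image (by fun_prop)).isClosed
  intro hconn
  rw [hfix] at hconn
  exact not_isPreconnected_biUnion_of_pairwiseDisjoint hq hpieces_closed
    (fun _ _ => hne.image _) (pairwiseDisjoint_pieces_of_isNeighbor hn0 hm0 hnbr)
    hconn.isPreconnected

/-- For `T = [[n,0],[0,m]]` with `n ≥ m ≥ 2` and a digit set `D ⊆ S`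
with `#D ≥ 2` that is not eigen-collinear, with `b₁ = (n-1,0)ᵀ`, `b₂ = (0,m-1)ᵀ`,
`b₃ = (n-1,m-1)ᵀ`: if none of `b₁, b₂, b₃, b₁ - b₂` belongs to `ΔD`, then the attractor
`F(T,D)` (the unique nonempty compact set with `F = ⋃_{d ∈ D} T⁻¹(F + d)`) is
disconnected. -/
theorem stmt7 (n m : ℤ) (hnm : m ≤ n) (hm : 2 ≤ m)
    (D : Finset (Fin 2 → ℤ)) (hDS : ∀ d ∈ D, InS n m d) (hq : 2 ≤ D.card)
    (hec : ¬ EigenCollinear (Tmat n 0 m) D)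
    (F : Set (Fin 2 → ℝ)) (hne : F.Nonempty) (hcpt : IsCompact F)
    (hfix : F = ⋃ d ∈ D, (fun x => (Tmat n 0 m)⁻¹ *ᵥ (x + castVec d)) '' F)
    (hb1 : ¬ InDelta D ![n - 1, 0]) (hb2 : ¬ InDelta D ![0, m - 1])
    (hb3 : ¬ InDelta D ![n - 1, m - 1])
    (hb12 : ¬ InDelta D (![n - 1, 0] - ![0, m - 1])) :
    ¬ IsConnected F :=
  stmt7_general n m hnm hm D hDS hq F hne hcpt hfix hb1 hb2 hb3 hb12
end

section
/- Let T be the 2×2 integer matrix with entries T₁₁ = n, T₁₂ = 0, T₂₁ = 1, T₂₂ = m, where n ≥ m ≥ 2, and let D ⊂ ℤ² be any finite digit set. Set a₁ = (n−1, 1)ᵀ and a₂ = (0, m−1)ᵀ. Then the neighbor set 𝒩 of F(T,D) contains { ±k·e_i : k ≥ 1 an integer, i ∈ {1,2}, k·a_i ∈ ΔD } ∪ { ±(k·e₁ + l·e₂) : k, l ≥ 1 integers, k·a₁ + l·a₂ ∈ ΔD } ∪ { ±(k·e₁ − l·e₂) : k, l ≥ 1 integers, k·a₁ − l·a₂ ∈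 ΔD }. -/
open Matrix Pointwise

/-!
If `T z - z = d - d'` with `d, d' ∈ D`, then `z` is the fixed point of the affine map
`w ↦ T⁻¹ (w + (d - d'))`. By the set equation this map sends `F - F` into itself, and for
`n, m ≥ 2` it is a contraction of the sup norm (with ratio `3/4`), so its unique fixed point lies
in the compact set `F - F`. For `z = k e₁ + l e₂` one has `T z - z = k a₁ + l a₂`.
-/

open NNReal Function Set

theorem mem_sub_self_of_isFixedPt {E : Type*} [NormedAddCommGroup E] {L : E →+ E} {K : ℝ≥0}
    (hK : K < 1) (hL : ∀ v, ‖L v‖ ≤ K * ‖v‖) {F D : Set E} (hFne : F.Nonempty)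
    (hFc : IsCompact F) (hF : ∀ x ∈ F, ∀ d ∈ D, L (x + d) ∈ F) {d d' z : E} (hd : d ∈ D)
    (hd' : d' ∈ D) (hz : IsFixedPt (fun w ↦ L (w + (d - d'))) z) : z ∈ F - F := by
  set g := fun w ↦ L (w + (d - d'))
  have hg : ContractingWith K g := ⟨hK, LipschitzWith.of_dist_le_mul fun x y ↦ by
    simpa [g, dist_eq_norm, ← map_sub] using hL (x - y)⟩
  have hmaps : MapsTo g (F - F) (F - F) := by
    rintro _ ⟨x, hx, y, hy, rfl⟩
    refine ⟨_, hF x hx d hd, _, hF y hy d' hd', ?_⟩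
    change L (x + d) - L (y + d') = L (x - y + (d - d'))
    rw [← map_sub, add_sub_add_comm]
  have hcomplete : IsComplete (F - F) := by
    simpa [sub_eq_add_neg] using (hFc.add hFc.neg).isComplete
  obtain ⟨x, hx⟩ := hFne
  obtain ⟨y, hy, hgy, -⟩ := ContractingWith.exists_fixedPoint' hcomplete hmaps (hg.restrict hmaps)
    (sub_mem_sub hx hx) (edist_ne_top _ _)
  rwa [hg.fixedPoint_unique' hz hgy]

theorem castVec_sub {k : ℕ} (a b : Fin k → ℤ) : castVec (a - b) = castVec a - castVec b := by
  ext i; simp [castVec]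

theorem castVec_neg {k : ℕ} (a : Fin k → ℤ) : castVec (-a) = -castVec a := by
  ext i; simp [castVec]

section Tmat

variable {n m : ℤ} (hn : 2 ≤ n) (hm : 2 ≤ m)
include hn hm

theorem isUnit_det_Tmat (t : ℤ) : IsUnit (Tmat n t m).det := by
  have : (n : ℝ) * m ≠ 0 := by positivity
  simpa [Tmat, det_fin_two_of] using this

theorem norm_le_norm_Tmat_mulVec (w : Fin 2 → ℝ) : ‖w‖ ≤ 3 / 4 * ‖Tmat n 1 m *ᵥ w‖ := by
  set v := Tmat n 1 m *ᵥ w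
  have hv0 : v 0 = n * w 0 := by simp [v, Tmat]
  have hv1 : v 1 = w 0 + m * w 1 := by simp [v, Tmat]
  have hn' : (2 : ℝ) ≤ n := by exact_mod_cast hn
  have hm' : (2 : ℝ) ≤ m := by exact_mod_cast hm
  have hv0_le : |v 0| ≤ ‖v‖ := norm_le_pi_norm v 0
  have hv1_le : |v 1| ≤ ‖v‖ := norm_le_pi_norm v 1
  have hw0 : 2 * |w 0| ≤ ‖v‖ := by
    calc 2 * |w 0| ≤ |(n : ℝ)| * |w 0| := by gcongr; exact hn'.trans (le_abs_self _)
      _ = |v 0| := by rw [hv0, abs_mul]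
      _ ≤ ‖v‖ := hv0_le
  have hw1 : 2 * |w 1| ≤ ‖v‖ + |w 0| := by
    calc 2 * |w 1| ≤ |(m : ℝ)| * |w 1| := by gcongr; exact hm'.trans (le_abs_self _)
      _ = |v 1 - w 0| := by rw [hv1, add_sub_cancel_left, abs_mul]
      _ ≤ |v 1| + |w 0| := abs_sub _ _
      _ ≤ ‖v‖ + |w 0| := by gcongr
  refine (pi_norm_le_iff_of_nonneg (by positivity)).2 (Fin.forall_fin_two.2 ⟨?_, ?_⟩)
  · rw [Real.norm_eq_abs]; linarith [norm_nonneg v]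
  · rw [Real.norm_eq_abs]; linarith

theorem norm_inv_Tmat_mulVec_le (v : Fin 2 → ℝ) : ‖(Tmat n 1 m)⁻¹ *ᵥ v‖ ≤ 3 / 4 * ‖v‖ := by
  simpa only [mulVec_mulVec, mul_nonsing_inv _ (isUnit_det_Tmat hn hm 1), one_mulVec]
    using norm_le_norm_Tmat_mulVec hn hm ((Tmat n 1 m)⁻¹ *ᵥ v)

end Tmat

theorem castVec_mem_sub_of_inDelta {n m : ℤ} (hn : 2 ≤ n) (hm : 2 ≤ m)
    {D : Finset (Fin 2 → ℤ)} {F : Set (Fin 2 → ℝ)} (hne : F.Nonempty) (hcpt : IsCompact F)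
    (hfix : F = ⋃ d ∈ D, (fun x => (Tmat n 1 m)⁻¹ *ᵥ (x + castVec d)) '' F)
    {z a : Fin 2 → ℤ} (ha : InDelta D a)
    (hz : Tmat n 1 m *ᵥ castVec z - castVec z = castVec a) : castVec z ∈ F - F := by
  obtain ⟨d, hd, d', hd', rfl⟩ := ha
  have hF : ∀ x ∈ F, ∀ e ∈ castVec '' D, (Tmat n 1 m)⁻¹ *ᵥ (x + e) ∈ F := by
    rintro x hx _ ⟨e, he, rfl⟩
    rw [hfix]
    exact mem_biUnion he ⟨x, hx, rfl⟩
  refine mem_sub_self_of_isFixedPt (L := (mulVecLin (Tmat n 1 m)⁻¹).toAddMonoidHom)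
    (K := 3 / 4) (by norm_num) (norm_inv_Tmat_mulVec_le hn hm) hne hcpt hF
    (mem_image_of_mem _ hd) (mem_image_of_mem _ hd') ?_
  change (Tmat n 1 m)⁻¹ *ᵥ (castVec z + (castVec d - castVec d')) = castVec z
  rw [← castVec_sub, ← hz, add_sub_cancel, mulVec_mulVec,
    nonsing_inv_mul _ (isUnit_det_Tmat hn hm 1), one_mulVec]

theorem stmt10_general (n m : ℤ) (hnm : m ≤ n) (hm : 2 ≤ m)
    (D : Finset (Fin 2 → ℤ))
    (F : Set (Fin 2 → ℝ)) (hne : F.Nonempty) (hcpt : IsCompact F)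
    (hfix : F = ⋃ d ∈ D, (fun x => (Tmat n 1 m)⁻¹ *ᵥ (x + castVec d)) '' F) :
    {z : Fin 2 → ℤ |
        (∃ k : ℕ, 1 ≤ k ∧ InDelta D ((k : ℤ) • ![n - 1, 1]) ∧
          (z = (k : ℤ) • ![1, 0] ∨ z = -((k : ℤ) • ![1, 0]))) ∨
        (∃ k : ℕ, 1 ≤ k ∧ InDelta D ((k : ℤ) • ![0, m - 1]) ∧
          (z = (k : ℤ) • ![0, 1] ∨ z = -((k : ℤ) • ![0, 1]))) ∨
        (∃ k l : ℕ, 1 ≤ k ∧ 1 ≤ l ∧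
          InDelta D ((k : ℤ) • ![n - 1, 1] + (l : ℤ) • ![0, m - 1]) ∧
          (z = (k : ℤ) • ![1, 0] + (l : ℤ) • ![0, 1] ∨
            z = -((k : ℤ) • ![1, 0] + (l : ℤ) • ![0, 1]))) ∨
        (∃ k l : ℕ, 1 ≤ k ∧ 1 ≤ l ∧
          InDelta D ((k : ℤ) • ![n - 1, 1] - (l : ℤ) • ![0, m - 1]) ∧
          (z = (k : ℤ) • ![1, 0] - (l : ℤ) • ![0, 1] ∨
            z = -((k : ℤ) • ![1, 0] - (l : ℤ) • ![0, 1])))} ⊆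
      {z : Fin 2 → ℤ | z ≠ 0 ∧ castVec z ∈ F - F} := by
  intro z hz
  obtain ⟨w, a, ha, hwa, hw0, hzw⟩ : ∃ w a : Fin 2 → ℤ, InDelta D a ∧
      Tmat n 1 m *ᵥ castVec w - castVec w = castVec a ∧ w ≠ 0 ∧ (z = w ∨ z = -w) := by
    rcases hz with ⟨k, hk, ha, hz⟩ | ⟨k, hk, ha, hz⟩ | ⟨k, l, hk, hl, ha, hz⟩ |
        ⟨k, l, hk, hl, ha, hz⟩ <;>
      refine ⟨_, _, ha, ?_, ?_, hz⟩ <;>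
      simp [funext_iff, Fin.forall_fin_two, Tmat, castVec, vecHead, vecTail] <;>
      grind
  have hw := castVec_mem_sub_of_inDelta (hm.trans hnm) hm hne hcpt hfix ha hwa
  rcases hzw with rfl | rfl
  · exact ⟨hw0, hw⟩
  · refine ⟨neg_ne_zero.2 hw0, ?_⟩
    rw [castVec_neg, ← neg_sub F F]
    exact neg_mem_neg.2 hw

/-- For `T = [[n,0],[1,m]]` with `n ≥ m ≥ 2` and any finite digit set
`D ⊂ ℤ²`, with `a₁ = (n-1,1)ᵀ`, `a₂ = (0,m-1)ᵀ`: the neighbor set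
`𝒩 = (F - F) ∩ (ℤ² \ {0})` of the attractor `F = F(T,D)` (the unique nonempty compact
set with `F = ⋃_{d ∈ D} T⁻¹(F + d)`) contains
`{±k·eᵢ : k ≥ 1, i ∈ {1,2}, k·aᵢ ∈ ΔD} ∪ {±(k·e₁ + l·e₂) : k,l ≥ 1, k·a₁ + l·a₂ ∈ ΔD}
∪ {±(k·e₁ - l·e₂) : k,l ≥ 1, k·a₁ - l·a₂ ∈ ΔD}`. -/
theorem stmt10 (n m : ℤ) (hnm : m ≤ n) (hm : 2 ≤ m)
    (D : Finset (Fin 2 → ℤ)) (hD : D.Nonempty)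
    (F : Set (Fin 2 → ℝ)) (hne : F.Nonempty) (hcpt : IsCompact F)
    (hfix : F = ⋃ d ∈ D, (fun x => (Tmat n 1 m)⁻¹ *ᵥ (x + castVec d)) '' F) :
    {z : Fin 2 → ℤ |
        (∃ k : ℕ, 1 ≤ k ∧ InDelta D ((k : ℤ) • ![n - 1, 1]) ∧
          (z = (k : ℤ) • ![1, 0] ∨ z = -((k : ℤ) • ![1, 0]))) ∨
        (∃ k : ℕ, 1 ≤ k ∧ InDelta D ((k : ℤ) • ![0, m - 1]) ∧
          (z = (k : ℤ) • ![0, 1] ∨ z = -((k : ℤ) • ![0, 1]))) ∨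
        (∃ k l : ℕ, 1 ≤ k ∧ 1 ≤ l ∧
          InDelta D ((k : ℤ) • ![n - 1, 1] + (l : ℤ) • ![0, m - 1]) ∧
          (z = (k : ℤ) • ![1, 0] + (l : ℤ) • ![0, 1] ∨
            z = -((k : ℤ) • ![1, 0] + (l : ℤ) • ![0, 1]))) ∨
        (∃ k l : ℕ, 1 ≤ k ∧ 1 ≤ l ∧
          InDelta D ((k : ℤ) • ![n - 1, 1] - (l : ℤ) • ![0, m - 1]) ∧
          (z = (k : ℤ) • ![1, 0] - (l : ℤ) • ![0, 1] ∨
            z = -((k : ℤ) • ![1, 0] - (l : ℤ) • ![0, 1])))} ⊆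
      {z : Fin 2 → ℤ | z ≠ 0 ∧ castVec z ∈ F - F} :=
  stmt10_general n m hnm hm D F hne hcpt hfix
end

section
/- Let T be the 2×2 integer matrix with entries T₁₁ = n, T₁₂ = 0, T₂₁ = 0, T₂₂ = m, where n ≥ m ≥ 2, and let D ⊂ ℤ² be any finite digit set. Set b₁ = (n−1, 0)ᵀ, b₂ = (0, m−1)ᵀ, b₃ = (n−1, m−1)ᵀ. Then the neighbor set 𝒩 of F(T,D) contains { ±k·e_i : k ≥ 1 an integer, i ∈ {1,2,3}, k·b_i ∈ ΔD } ∪ { ±(k·e₁ + l·e₂) : k, l ≥ 1 integers, k·b₁ + l·b₂ ∈ ΔD } ∪ { ±(k·e₁ − l·e₂) : k, l ≥ 1 integers, k·b₁ − l·b₂ ∈ ΔD }. -/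
open Matrix Pointwise

/-!
For `v = d - d' ∈ ΔD` the map `w ↦ T⁻¹(w + v)` sends `F - F` into itself, because
`T⁻¹(x + d) - T⁻¹(y + d') = T⁻¹((x - y) + v)`. It is a contraction, so its fixed point
`(T - 1)⁻¹ v`, the limit of its iterates started anywhere in the closed set `F - F`, lies in
`F - F`. For `T = diag(n, m)` every vector of the statement is `±(T - 1)⁻¹ v` for such a `v`,
and `ΔD = -ΔD`.
-/

open Function Set NNReal

theorem ContractingWith.mem_of_isFixedPt {α : Type*} [MetricSpace α] [CompleteSpace α]
    {f : α → α} {q : ℝ≥0} (hf : ContractingWith q f) {K : Set α} (hK : IsClosed K)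
    (hne : K.Nonempty) (hmaps : MapsTo f K K) {z : α} (hz : IsFixedPt f z) : z ∈ K := by
  obtain ⟨x, hx⟩ := hne
  have : Nonempty α := ⟨x⟩
  rw [hf.fixedPoint_unique hz]
  exact hK.mem_of_tendsto (hf.tendsto_iterate_fixedPoint x)
    (Filter.Eventually.of_forall fun k => hmaps.iterate k hx)

theorem IsCompact.sub_self {E : Type*} [AddGroup E] [TopologicalSpace E] [IsTopologicalAddGroup E]
    {F : Set E} (hF : IsCompact F) : IsCompact (F - F) :=
  Set.sub_image_prod (s := F) (t := F) ▸ (hF.prod hF).image continuous_sub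

section Matrix

variable {ι : Type*} [Fintype ι]

theorem ContractingWith.mulVec_add {A : Matrix ι ι ℝ} {q : ℝ≥0}
    (hA : ContractingWith q (A *ᵥ ·)) (v : ι → ℝ) :
    ContractingWith q (fun w => A *ᵥ (w + v)) := by
  refine ⟨hA.1, LipschitzWith.of_dist_le_mul fun x y => ?_⟩
  rw [Matrix.mulVec_add, Matrix.mulVec_add, dist_add_right]
  exact hA.2.dist_le_mul x y

theorem contractingWith_diagonal_mulVec [DecidableEq ι] {c : ι → ℝ} {q : ℝ≥0} (hq : q < 1)
    (hc : ∀ i, |c i| ≤ q) : ContractingWith q (diagonal c *ᵥ ·) := by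
  refine ⟨hq, LipschitzWith.of_dist_le_mul fun x y =>
    (dist_pi_le_iff (by positivity)).2 fun i => ?_⟩
  calc dist ((diagonal c *ᵥ x) i) ((diagonal c *ᵥ y) i) = |c i| * dist (x i) (y i) := by
        simp only [mulVec_diagonal, Real.dist_eq, ← mul_sub, abs_mul]
    _ ≤ q * dist x y := by gcongr; exacts [hc i, dist_le_pi_dist x y i]

theorem mapsTo_sub_self {A : Matrix ι ι ℝ} {S F : Set (ι → ℝ)}
    (hF : ∀ d ∈ S, ∀ x ∈ F, A *ᵥ (x + d) ∈ F) {d d' : ι → ℝ} (hd : d ∈ S) (hd' : d' ∈ S) :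
    MapsTo (fun w => A *ᵥ (w + (d - d'))) (F - F) (F - F) := by
  rintro _ ⟨x, hx, y, hy, rfl⟩
  refine ⟨_, hF d hd x hx, _, hF d' hd' y hy, ?_⟩
  dsimp only
  rw [← mulVec_sub, add_sub_add_comm]

theorem isFixedPt_diagonal_inv_mulVec_add [DecidableEq ι] {a z v : ι → ℝ} (ha : ∀ i, a i ≠ 0)
    (hz : ∀ i, (a i - 1) * z i = v i) : IsFixedPt (fun w => diagonal a⁻¹ *ᵥ (w + v)) z := by
  funext i
  simp only [mulVec_diagonal, Pi.inv_apply, Pi.add_apply, ← hz i]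
  field_simp [ha i]
  ring

theorem mem_sub_self_of_isFixedPt_s11 {A : Matrix ι ι ℝ} {q : ℝ≥0}
    (hA : ContractingWith q (A *ᵥ ·)) {S F : Set (ι → ℝ)} (hne : F.Nonempty) (hcpt : IsCompact F)
    (hF : ∀ d ∈ S, ∀ x ∈ F, A *ᵥ (x + d) ∈ F) {d d' : ι → ℝ} (hd : d ∈ S) (hd' : d' ∈ S)
    {z : ι → ℝ} (hz : IsFixedPt (fun w => A *ᵥ (w + (d - d'))) z) : z ∈ F - F :=
  (hA.mulVec_add _).mem_of_isFixedPt hcpt.sub_self.isClosed (hne.sub hne)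
    (mapsTo_sub_self hF hd hd') hz

end Matrix

theorem inv_Tmat_zero {n m : ℤ} (hn : n ≠ 0) (hm : m ≠ 0) :
    (Tmat n 0 m)⁻¹ = diagonal ![(n : ℝ), m]⁻¹ := by
  have hT : Tmat n 0 m = diagonal ![(n : ℝ), m] := by
    ext i j; fin_cases i <;> fin_cases j <;> simp [Tmat]
  refine hT ▸ inv_eq_left_inv ?_
  rw [diagonal_mul_diagonal, ← diagonal_one]
  congr 1
  ext i; fin_cases i <;> simp [hn, hm]

theorem InDelta.neg {D : Finset (Fin 2 → ℤ)} {v : Fin 2 → ℤ} (h : InDelta D v) :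
    InDelta D (-v) := by
  obtain ⟨d, hd, d', hd', rfl⟩ := h
  exact ⟨d', hd', d, hd, neg_sub d d'⟩

theorem castVec_mem_sub_self {n m : ℤ} (hn : 2 ≤ n) (hm : 2 ≤ m) {D : Finset (Fin 2 → ℤ)}
    {F : Set (Fin 2 → ℝ)} (hne : F.Nonempty) (hcpt : IsCompact F)
    (hfix : F = ⋃ d ∈ D, (fun x => (Tmat n 0 m)⁻¹ *ᵥ (x + castVec d)) '' F)
    {v z : Fin 2 → ℤ} (hv : InDelta D v) (h0 : (n - 1) * z 0 = v 0) (h1 : (m - 1) * z 1 = v 1) :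
    castVec z ∈ F - F := by
  obtain ⟨d, hd, d', hd', rfl⟩ := hv
  set a : Fin 2 → ℝ := ![(n : ℝ), m]
  have ha : ∀ i, 2 ≤ a i :=
    Fin.forall_fin_two.2 ⟨by simp [a]; exact_mod_cast hn, by simp [a]; exact_mod_cast hm⟩
  have hT : (Tmat n 0 m)⁻¹ = diagonal a⁻¹ := inv_Tmat_zero (by omega) (by omega)
  have hF : ∀ e ∈ castVec '' D, ∀ x ∈ F, diagonal a⁻¹ *ᵥ (x + e) ∈ F := by
    rintro _ ⟨e, he, rfl⟩ x hx
    rw [hfix, ← hT]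
    exact mem_biUnion he (mem_image_of_mem _ hx)
  have hcontr : ContractingWith 2⁻¹ (diagonal a⁻¹ *ᵥ ·) := by
    refine contractingWith_diagonal_mulVec (by norm_num) fun i => ?_
    have hai := ha i
    rw [Pi.inv_apply, abs_inv, abs_of_pos (by linarith)]
    push_cast
    exact inv_anti₀ (by norm_num) hai
  refine mem_sub_self_of_isFixedPt_s11 hcontr hne hcpt hF (mem_image_of_mem _ hd)
    (mem_image_of_mem _ hd') (isFixedPt_diagonal_inv_mulVec_add (fun i => by linarith [ha i]) ?_)
  refine Fin.forall_fin_two.2 ⟨?_, ?_⟩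
  · simpa [a, castVec] using congrArg (Int.cast : ℤ → ℝ) h0
  · simpa [a, castVec] using congrArg (Int.cast : ℤ → ℝ) h1

theorem stmt11_general (n m : ℤ) (hnm : m ≤ n) (hm : 2 ≤ m)
    (D : Finset (Fin 2 → ℤ))
    (F : Set (Fin 2 → ℝ)) (hne : F.Nonempty) (hcpt : IsCompact F)
    (hfix : F = ⋃ d ∈ D, (fun x => (Tmat n 0 m)⁻¹ *ᵥ (x + castVec d)) '' F) :
    {z : Fin 2 → ℤ |
        (∃ k : ℕ, 1 ≤ k ∧ InDelta D ((k : ℤ) • ![n - 1, 0]) ∧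
          (z = (k : ℤ) • ![1, 0] ∨ z = -((k : ℤ) • ![1, 0]))) ∨
        (∃ k : ℕ, 1 ≤ k ∧ InDelta D ((k : ℤ) • ![0, m - 1]) ∧
          (z = (k : ℤ) • ![0, 1] ∨ z = -((k : ℤ) • ![0, 1]))) ∨
        (∃ k : ℕ, 1 ≤ k ∧ InDelta D ((k : ℤ) • ![n - 1, m - 1]) ∧
          (z = (k : ℤ) • ![1, 1] ∨ z = -((k : ℤ) • ![1, 1]))) ∨
        (∃ k l : ℕ, 1 ≤ k ∧ 1 ≤ l ∧
          InDelta D ((k : ℤ) • ![n - 1, 0] + (l : ℤ) • ![0, m - 1]) ∧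
          (z = (k : ℤ) • ![1, 0] + (l : ℤ) • ![0, 1] ∨
            z = -((k : ℤ) • ![1, 0] + (l : ℤ) • ![0, 1]))) ∨
        (∃ k l : ℕ, 1 ≤ k ∧ 1 ≤ l ∧
          InDelta D ((k : ℤ) • ![n - 1, 0] - (l : ℤ) • ![0, m - 1]) ∧
          (z = (k : ℤ) • ![1, 0] - (l : ℤ) • ![0, 1] ∨
            z = -((k : ℤ) • ![1, 0] - (l : ℤ) • ![0, 1])))} ⊆
      {z : Fin 2 → ℤ | z ≠ 0 ∧ castVec z ∈ F - F} := by
  have hn : 2 ≤ n := hm.trans hnm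
  have hneighbor : ∀ v w : Fin 2 → ℤ, InDelta D v → (n - 1) * w 0 = v 0 → (m - 1) * w 1 = v 1 →
      w ≠ 0 → ∀ z, z = w ∨ z = -w → z ≠ 0 ∧ castVec z ∈ F - F := by
    rintro v w hv h0 h1 hw z (rfl | rfl)
    · exact ⟨hw, castVec_mem_sub_self hn hm hne hcpt hfix hv h0 h1⟩
    · refine ⟨neg_ne_zero.2 hw, castVec_mem_sub_self hn hm hne hcpt hfix hv.neg ?_ ?_⟩ <;>
        simp [h0, h1]
  rintro z (⟨k, hk, hv, hz⟩ | ⟨k, hk, hv, hz⟩ | ⟨k, hk, hv, hz⟩ | ⟨k, l, hk, hl, hv, hz⟩ |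
    ⟨k, l, hk, hl, hv, hz⟩) <;>
    refine hneighbor _ _ hv (by simp [mul_comm]) (by simp [mul_comm]) ?_ z hz <;>
    simp [funext_iff, Fin.forall_fin_two] <;> omega

/-- For `T = [[n,0],[0,m]]` with `n ≥ m ≥ 2` and any finite digit set
`D ⊂ ℤ²`, with `b₁ = (n-1,0)ᵀ`, `b₂ = (0,m-1)ᵀ`, `b₃ = (n-1,m-1)ᵀ`: the neighbor set
`𝒩 = (F - F) ∩ (ℤ² \ {0})` of the attractor `F = F(T,D)` (the unique nonempty compact
set with `F = ⋃_{d ∈ D} T⁻¹(F + d)`) contains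
`{±k·eᵢ : k ≥ 1, i ∈ {1,2,3}, k·bᵢ ∈ ΔD} ∪ {±(k·e₁ + l·e₂) : k,l ≥ 1, k·b₁ + l·b₂ ∈ ΔD}
∪ {±(k·e₁ - l·e₂) : k,l ≥ 1, k·b₁ - l·b₂ ∈ ΔD}`. -/
theorem stmt11 (n m : ℤ) (hnm : m ≤ n) (hm : 2 ≤ m)
    (D : Finset (Fin 2 → ℤ)) (hD : D.Nonempty)
    (F : Set (Fin 2 → ℝ)) (hne : F.Nonempty) (hcpt : IsCompact F)
    (hfix : F = ⋃ d ∈ D, (fun x => (Tmat n 0 m)⁻¹ *ᵥ (x + castVec d)) '' F) :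
    {z : Fin 2 → ℤ |
        (∃ k : ℕ, 1 ≤ k ∧ InDelta D ((k : ℤ) • ![n - 1, 0]) ∧
          (z = (k : ℤ) • ![1, 0] ∨ z = -((k : ℤ) • ![1, 0]))) ∨
        (∃ k : ℕ, 1 ≤ k ∧ InDelta D ((k : ℤ) • ![0, m - 1]) ∧
          (z = (k : ℤ) • ![0, 1] ∨ z = -((k : ℤ) • ![0, 1]))) ∨
        (∃ k : ℕ, 1 ≤ k ∧ InDelta D ((k : ℤ) • ![n - 1, m - 1]) ∧
          (z = (k : ℤ) • ![1, 1] ∨ z = -((k : ℤ) • ![1, 1]))) ∨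
        (∃ k l : ℕ, 1 ≤ k ∧ 1 ≤ l ∧
          InDelta D ((k : ℤ) • ![n - 1, 0] + (l : ℤ) • ![0, m - 1]) ∧
          (z = (k : ℤ) • ![1, 0] + (l : ℤ) • ![0, 1] ∨
            z = -((k : ℤ) • ![1, 0] + (l : ℤ) • ![0, 1]))) ∨
        (∃ k l : ℕ, 1 ≤ k ∧ 1 ≤ l ∧
          InDelta D ((k : ℤ) • ![n - 1, 0] - (l : ℤ) • ![0, m - 1]) ∧
          (z = (k : ℤ) • ![1, 0] - (l : ℤ) • ![0, 1] ∨
            z = -((k : ℤ) • ![1, 0] - (l : ℤ) • ![0, 1])))} ⊆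
      {z : Fin 2 → ℤ | z ≠ 0 ∧ castVec z ∈ F - F} :=
  stmt11_general n m hnm hm D F hne hcpt hfix
end
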